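/- arXiv:2408.14913 — 8 statements merged into one kernel-verified Lean document; each statement's English description precedes it below -/
import Mathlib

section
/- Single-period MNL pricing (Lemma 1). Let S be a nonempty finite index set, q : S → ℝ, Δ : S → ℝ, and β < 0. Let Γ ≥ 0 satisfy Γ·exp(Γ) = Σ_{i∈S} exp(q_i + β·Δ_i − 1). For p : S → ℝ define ρ_i(p) = exp(q_i + β·p_i)/(1 + Σ_{j∈S} exp(q_j + β·p_j)) and R(p) = Σ_{i∈S} ρ_i(p)·(p_i − Δ_i). Then: (a) sup_{p : S → ℝ} R(p) = −Γ/β; (b) the supremum is attained at the price vector p* given by p*_i = Δ_i − (1+Γ)/β for every i ∈ S; (c) at p* the choice probabilities are ρ_i(p*) = (Γ/(1+Γ))·exp(q_i + β·Δ_i)/(Σ_{j∈S} exp(q_j + β·Δ_j)) for every i ∈ S. -/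
private lemma aux_ineq (u a g : ℝ) :
    -(Real.exp (a - g - 1)) ≤ Real.exp u * (u - a + g) := by
  have h := Real.add_one_le_exp (a - g - 1 - u)
  have hmul : Real.exp (a - g - 1 - u) * Real.exp u = Real.exp (a - g - 1) := by
    rw [← Real.exp_add]; ring_nf
  nlinarith [Real.exp_pos u]

/-- Single-period MNL pricing (Lemma 1): closed-form optimal revenue, prices and
choice probabilities via the Lambert W value `Γ`. -/
theorem stmt_0 {ι : Type*} [Fintype ι] [Nonempty ι]
    (q Δ : ι → ℝ) (β : ℝ) (hβ : β < 0)
    (Γ : ℝ) (hΓ0 : 0 ≤ Γ)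
    (hΓ : Γ * Real.exp Γ = ∑ i, Real.exp (q i + β * Δ i - 1))
    (ρ : (ι → ℝ) → ι → ℝ)
    (hρ : ∀ p i, ρ p i =
      Real.exp (q i + β * p i) / (1 + ∑ j, Real.exp (q j + β * p j)))
    (R : (ι → ℝ) → ℝ)
    (hR : ∀ p, R p = ∑ i, ρ p i * (p i - Δ i))
    (pstar : ι → ℝ)
    (hpstar : ∀ i, pstar i = Δ i - (1 + Γ) / β) :
    (⨆ p : ι → ℝ, R p) = -Γ / β ∧
    R pstar = -Γ / β ∧
    ∀ i, ρ pstar i =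
      (Γ / (1 + Γ)) * Real.exp (q i + β * Δ i) / (∑ j, Real.exp (q j + β * Δ j)) := by
  have hβne : β ≠ 0 := ne_of_lt hβ
  -- positivity of A
  have hApos : 0 < ∑ i, Real.exp (q i + β * Δ i - 1) :=
    Finset.sum_pos (fun i _ => Real.exp_pos _) Finset.univ_nonempty
  have hΓpos : 0 < Γ := by
    rcases lt_or_eq_of_le hΓ0 with h | h
    · exact h
    · exfalso; rw [← h] at hΓ; simp at hΓ; linarith
  have h1Γ : (0:ℝ) < 1 + Γ := by linarith
  -- exponent at pstar
  have hexp : ∀ i, q i + β * pstar i = q i + β * Δ i - 1 - Γ := by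
    intro i; rw [hpstar i]; field_simp; ring
  -- sum of exps at pstar equals Γ
  have hsum : (∑ j, Real.exp (q j + β * pstar j)) = Γ := by
    have : ∀ j, Real.exp (q j + β * pstar j)
        = Real.exp (q j + β * Δ j - 1) * Real.exp (-Γ) := by
      intro j; rw [hexp j, ← Real.exp_add]; ring_nf
    rw [Finset.sum_congr rfl (fun j _ => this j), ← Finset.sum_mul, ← hΓ,
      mul_assoc, ← Real.exp_add]
    simp
  -- ρ at pstar
  have hρstar : ∀ i, ρ pstar i = Real.exp (q i + β * Δ i - 1 - Γ) / (1 + Γ) := by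
    intro i; rw [hρ, hsum, hexp i]
  -- R pstar
  have hRstar : R pstar = -Γ / β := by
    rw [hR]
    have : ∀ i, ρ pstar i * (pstar i - Δ i)
        = Real.exp (q i + β * Δ i - 1) * (Real.exp (-Γ) * (-(1 + Γ) / β) / (1 + Γ)) := by
      intro i
      rw [hρstar i, hpstar i]
      have : Real.exp (q i + β * Δ i - 1 - Γ)
          = Real.exp (q i + β * Δ i - 1) * Real.exp (-Γ) := by
        rw [← Real.exp_add]; ring_nf
      rw [this]; ring
    rw [Finset.sum_congr rfl (fun i _ => this i), ← Finset.sum_mul, ← hΓ]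
    have hΓe : Real.exp Γ * Real.exp (-Γ) = 1 := by
      rw [← Real.exp_add]; simp
    field_simp
    linear_combination (-1) * hΓe
  -- upper bound
  have key : ∀ p : ι → ℝ, R p ≤ -Γ / β := by
    intro p
    set D := 1 + ∑ j, Real.exp (q j + β * p j) with hD
    have hDpos : 0 < D := by
      have : (0:ℝ) ≤ ∑ j, Real.exp (q j + β * p j) :=
        Finset.sum_nonneg (fun j _ => (Real.exp_pos _).le)
      linarith
    have hβR : β * R p = (∑ i, Real.exp (q i + β * p i) * (β * p i - β * Δ i)) / D := by
      rw [hR, Finset.mul_sum, Finset.sum_div]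
      refine Finset.sum_congr rfl (fun i _ => ?_)
      rw [hρ]
      rw [← hD]
      ring
    have hnum : -Γ * D ≤ ∑ i, Real.exp (q i + β * p i) * (β * p i - β * Δ i) := by
      have hterm : ∀ i, -(Real.exp (q i + β * Δ i - 1)) * Real.exp (-Γ)
          - Real.exp (q i + β * p i) * Γ
          ≤ Real.exp (q i + β * p i) * (β * p i - β * Δ i) := by
        intro i
        have h := aux_ineq (q i + β * p i) (q i + β * Δ i) Γ
        have he : Real.exp (q i + β * Δ i - Γ - 1)
            = Real.exp (q i + β * Δ i - 1) * Real.exp (-Γ) := by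
          rw [← Real.exp_add]; ring_nf
        nlinarith [Real.exp_pos (q i + β * p i)]
      have hsumge : (∑ i, (-(Real.exp (q i + β * Δ i - 1)) * Real.exp (-Γ)
          - Real.exp (q i + β * p i) * Γ))
          ≤ ∑ i, Real.exp (q i + β * p i) * (β * p i - β * Δ i) :=
        Finset.sum_le_sum (fun i _ => hterm i)
      have hL : ∑ i, (-(Real.exp (q i + β * Δ i - 1)) * Real.exp (-Γ)
          - Real.exp (q i + β * p i) * Γ) = -Γ * D := by
        rw [Finset.sum_sub_distrib, ← Finset.sum_mul, ← Finset.sum_mul,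
          Finset.sum_neg_distrib, ← hΓ]
        have hΓe : Real.exp Γ * Real.exp (-Γ) = 1 := by
          rw [← Real.exp_add]; simp
        rw [hD]; linear_combination (-Γ) * hΓe
      linarith [hL ▸ hsumge]
    have hβRge : -Γ ≤ β * R p := by
      rw [hβR]
      rw [le_div_iff₀ hDpos]
      linarith
    rw [le_div_iff_of_neg hβ]
    nlinarith [hβRge]
  -- sup
  have hbdd : BddAbove (Set.range R) := ⟨-Γ / β, by rintro _ ⟨p, rfl⟩; exact key p⟩
  have hsup : (⨆ p : ι → ℝ, R p) = -Γ / β := by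
    apply le_antisymm (ciSup_le key)
    calc -Γ / β = R pstar := hRstar.symm
    _ ≤ ⨆ p, R p := le_ciSup hbdd pstar
  refine ⟨hsup, hRstar, ?_⟩
  -- part (c)
  intro i
  have hAe : (∑ j, Real.exp (q j + β * Δ j)) = Γ * Real.exp (1 + Γ) := by
    have : ∀ j, Real.exp (q j + β * Δ j) = Real.exp (q j + β * Δ j - 1) * Real.exp 1 := by
      intro j; rw [← Real.exp_add]; ring_nf
    rw [Finset.sum_congr rfl (fun j _ => this j), ← Finset.sum_mul, ← hΓ,
      mul_assoc, ← Real.exp_add, add_comm Γ 1]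
  rw [hρstar i, hAe]
  have he : Real.exp (q i + β * Δ i - 1 - Γ) * Real.exp (1 + Γ) = Real.exp (q i + β * Δ i) := by
    rw [← Real.exp_add]; ring_nf
  have hepos := Real.exp_pos (1 + Γ)
  field_simp
  linear_combination he
end

section
/- Concavity of the single-period expected revenue in choice probabilities. Let S be a nonempty finite index set, q : S → ℝ, Δ : S → ℝ, and β < 0. Let D = { ρ : S → ℝ : ρ_i > 0 for all i ∈ S and Σ_{i∈S} ρ_i < 1 }. Then D is a convex set and the function r(ρ) = (1/β)·Σ_{i∈S} ρ_i·(ln ρ_i − ln(1 − Σ_{j∈S} ρ_j) − q_i − β·Δ_i) is concave on D. -/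
open Finset Real

/-- Algebraic identity rewriting the revenue sum into convex building blocks. -/
private lemma mnl_sum_id {ι : Type*} [Fintype ι] (q Δ : ι → ℝ) (β : ℝ) (ρ : ι → ℝ) :
    ∑ i, ρ i * (Real.log (ρ i) - Real.log (1 - ∑ j, ρ j) - q i - β * Δ i)
      = (∑ i, ρ i * Real.log (ρ i))
        + ((1 - ∑ j, ρ j) * Real.log (1 - ∑ j, ρ j) - Real.log (1 - ∑ j, ρ j))
        - ∑ i, (q i + β * Δ i) * ρ i := by
  have h1 : ∑ i, ρ i * (Real.log (ρ i) - Real.log (1 - ∑ j, ρ j) - q i - β * Δ i)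
      = (∑ i, ρ i * Real.log (ρ i)) - (∑ i, ρ i) * Real.log (1 - ∑ j, ρ j)
        - ∑ i, (q i + β * Δ i) * ρ i := by
    rw [Finset.sum_mul, ← Finset.sum_sub_distrib, ← Finset.sum_sub_distrib]
    congr 1
    funext i
    ring
  rw [h1]
  ring

/-- Concavity of the single-period MNL expected revenue in the choice
probabilities, on the domain of interior probability vectors. -/
theorem stmt_1 {ι : Type*} [Fintype ι] [Nonempty ι]
    (q Δ : ι → ℝ) (β : ℝ) (hβ : β < 0) :
    Convex ℝ {ρ : ι → ℝ | (∀ i, 0 < ρ i) ∧ ∑ i, ρ i < 1} ∧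
    ConcaveOn ℝ {ρ : ι → ℝ | (∀ i, 0 < ρ i) ∧ ∑ i, ρ i < 1}
      (fun ρ => (1 / β) * ∑ i, ρ i *
        (Real.log (ρ i) - Real.log (1 - ∑ j, ρ j) - q i - β * Δ i)) := by
  set D : Set (ι → ℝ) := {ρ : ι → ℝ | (∀ i, 0 < ρ i) ∧ ∑ i, ρ i < 1} with hD
  have hDconv : Convex ℝ D := by
    intro ρ hρ σ hσ a b ha hb hab
    refine ⟨fun i => ?_, ?_⟩
    · simp only [Pi.add_apply, Pi.smul_apply, smul_eq_mul]
      rcases eq_or_lt_of_le ha with h | h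
      · have hb1 : b = 1 := by linarith
        simpa [← h, hb1] using hσ.1 i
      · have := hσ.1 i
        have := hρ.1 i
        nlinarith
    · have : ∑ i, (a • ρ + b • σ) i = a * (∑ i, ρ i) + b * (∑ i, σ i) := by
        simp [Finset.sum_add_distrib, Finset.mul_sum]
      rw [this]
      rcases eq_or_lt_of_le ha with h | h
      · have hb1 : b = 1 := by linarith
        simpa [← h, hb1] using hσ.2
      · nlinarith [mul_lt_mul_of_pos_left hρ.2 h, mul_le_mul_of_nonneg_left hσ.2.le hb]
  refine ⟨hDconv, ?_⟩
  -- F is convex on D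
  have hF : ConvexOn ℝ D (fun ρ => ∑ i, ρ i *
      (Real.log (ρ i) - Real.log (1 - ∑ j, ρ j) - q i - β * Δ i)) := by
    refine ⟨hDconv, ?_⟩
    intro ρ hρ σ hσ a b ha hb hab
    simp only [smul_eq_mul]
    set τ : ι → ℝ := a • ρ + b • σ with hτ
    have hτi : ∀ i, τ i = a * ρ i + b * σ i := by
      intro i; simp [hτ, smul_eq_mul]
    have hsum : ∑ j, τ j = a * (∑ j, ρ j) + b * (∑ j, σ j) := by
      simp [hτ, Finset.sum_add_distrib, Finset.mul_sum]
    rw [mnl_sum_id q Δ β τ, mnl_sum_id q Δ β ρ, mnl_sum_id q Δ β σ]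
    have hρs : (0:ℝ) < 1 - ∑ j, ρ j := by linarith [hρ.2]
    have hσs : (0:ℝ) < 1 - ∑ j, σ j := by linarith [hσ.2]
    -- entropy terms
    have hent : ∀ i, τ i * Real.log (τ i)
        ≤ a * (ρ i * Real.log (ρ i)) + b * (σ i * Real.log (σ i)) := by
      intro i
      have := Real.convexOn_mul_log.2 (le_of_lt (hρ.1 i) : ρ i ∈ Set.Ici (0:ℝ))
        (le_of_lt (hσ.1 i)) ha hb hab
      simpa [smul_eq_mul, hτi i] using this
    have hentsum : ∑ i, τ i * Real.log (τ i)
        ≤ a * (∑ i, ρ i * Real.log (ρ i)) + b * (∑ i, σ i * Real.log (σ i)) := by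
      calc ∑ i, τ i * Real.log (τ i)
          ≤ ∑ i, (a * (ρ i * Real.log (ρ i)) + b * (σ i * Real.log (σ i))) :=
            Finset.sum_le_sum fun i _ => hent i
        _ = _ := by rw [Finset.sum_add_distrib, Finset.mul_sum, Finset.mul_sum]
    -- the (1-s) log (1-s) term
    have h1s : 1 - ∑ j, τ j = a * (1 - ∑ j, ρ j) + b * (1 - ∑ j, σ j) := by
      rw [hsum]; linarith
    have hg : (1 - ∑ j, τ j) * Real.log (1 - ∑ j, τ j)
        ≤ a * ((1 - ∑ j, ρ j) * Real.log (1 - ∑ j, ρ j))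
          + b * ((1 - ∑ j, σ j) * Real.log (1 - ∑ j, σ j)) := by
      have := Real.convexOn_mul_log.2 (le_of_lt hρs : (1 - ∑ j, ρ j) ∈ Set.Ici (0:ℝ))
        (le_of_lt hσs) ha hb hab
      simpa [smul_eq_mul, h1s] using this
    -- the -log(1-s) term
    have hlog : a * Real.log (1 - ∑ j, ρ j) + b * Real.log (1 - ∑ j, σ j)
        ≤ Real.log (1 - ∑ j, τ j) := by
      have := strictConcaveOn_log_Ioi.concaveOn.2 (hρs : (1 - ∑ j, ρ j) ∈ Set.Ioi (0:ℝ))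
        (hσs : (1 - ∑ j, σ j) ∈ Set.Ioi (0:ℝ)) ha hb hab
      simpa [smul_eq_mul, h1s] using this
    -- linear term
    have hlin : ∑ i, (q i + β * Δ i) * τ i
        = a * (∑ i, (q i + β * Δ i) * ρ i) + b * (∑ i, (q i + β * Δ i) * σ i) := by
      rw [Finset.mul_sum, Finset.mul_sum, ← Finset.sum_add_distrib]
      apply Finset.sum_congr rfl
      intro i _
      rw [hτi i]; ring
    rw [hlin]
    linarith
  -- multiply by 1/β < 0
  have hc : (0:ℝ) ≤ -(1/β) := by
    have : 1/β < 0 := div_neg_of_pos_of_neg one_pos hβ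
    linarith
  have := hF.neg.smul hc
  have heq : (fun ρ : ι → ℝ => (1 / β) * ∑ i, ρ i *
      (Real.log (ρ i) - Real.log (1 - ∑ j, ρ j) - q i - β * Δ i))
      = fun ρ => (-(1/β)) • (-(∑ i, ρ i *
        (Real.log (ρ i) - Real.log (1 - ∑ j, ρ j) - q i - β * Δ i))) := by
    funext ρ; simp only [smul_eq_mul]; ring
  rw [heq]
  exact this
end

section
/- Convergence rate of a noisy contraction-type recursion. Let k ∈ ℕ and let (r_n)_{n≥1}, (ε_n)_{n≥1} be real sequences with 1 ≤ r_n ≤ n for all n ≥ 1, and suppose there exist M > 0 and n₀ ≥ 2 such that |ε_n| ≤ M·(Real.log n)^k / n² for all n ≥ n₀. Let (y_n)_{n≥0} be a real sequence satisfying y_n = (1 − r_n/n)·y_{n−1} + ε_n for all n ≥ 1. Then there exist M' > 0 and n₁ ≥ 2 such that |y_n| ≤ M'·(Real.log n)^{k+1} / n for all n ≥ n₁. -/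
open Finset in
lemma sum_inv_le_log (n : ℕ) (hn : 1 ≤ n) :
    ∑ j ∈ Finset.Icc 2 n, (1 : ℝ) / j ≤ Real.log n := by
  have h := harmonic_le_one_add_log n
  rw [harmonic_eq_sum_Icc] at h
  push_cast at h
  have hsplit : ∑ j ∈ Finset.Icc 1 n, ((j : ℝ))⁻¹
      = 1 + ∑ j ∈ Finset.Icc 2 n, ((j : ℝ))⁻¹ := by
    rw [← Finset.sum_erase_add (Finset.Icc 1 n) _ (Finset.left_mem_Icc.mpr hn),
      Finset.Icc_erase_left, add_comm]
    norm_num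
    rw [show Finset.Ioc 1 n = Finset.Icc 2 n from rfl]
  simp only [one_div]
  rw [hsplit] at h
  linarith

/-- Convergence rate of a noisy contraction-type recursion: a recursion that
contracts at rate at least `1/n` per step, perturbed by noise of order
`(log n)^k / n²`, converges to `0` at rate `O((log n)^{k+1} / n)`. -/
theorem stmt_5 (k : ℕ) (r ε : ℕ → ℝ)
    (hr : ∀ n : ℕ, 1 ≤ n → 1 ≤ r n ∧ r n ≤ n)
    (M : ℝ) (hM : 0 < M) (n₀ : ℕ) (hn₀ : 2 ≤ n₀)
    (hε : ∀ n : ℕ, n₀ ≤ n → |ε n| ≤ M * Real.log n ^ k / (n : ℝ) ^ 2)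
    (y : ℕ → ℝ)
    (hy : ∀ n : ℕ, 1 ≤ n → y n = (1 - r n / n) * y (n - 1) + ε n) :
    ∃ M' : ℝ, 0 < M' ∧ ∃ n₁ : ℕ, 2 ≤ n₁ ∧
      ∀ n : ℕ, n₁ ≤ n → |y n| ≤ M' * Real.log n ^ (k + 1) / n := by
  -- Step 1: the one-step bound
  have key : ∀ n : ℕ, 1 ≤ n →
      (n : ℝ) * |y n| ≤ ((n - 1 : ℕ) : ℝ) * |y (n - 1)| + (n : ℝ) * |ε n| := by
    intro n hn
    have hn0 : (0 : ℝ) < n := by exact_mod_cast hn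
    have h1 : (1 : ℝ) ≤ r n := (hr n hn).1
    have h2 : r n ≤ (n : ℝ) := (hr n hn).2
    have hc0 : 0 ≤ 1 - r n / n := by
      rw [sub_nonneg, div_le_one hn0]; exact h2
    have hyn := hy n hn
    have habs : |y n| ≤ (1 - r n / n) * |y (n - 1)| + |ε n| := by
      rw [hyn]
      calc |(1 - r n / n) * y (n - 1) + ε n|
          ≤ |(1 - r n / n) * y (n - 1)| + |ε n| := abs_add_le _ _
        _ = (1 - r n / n) * |y (n - 1)| + |ε n| := by
            rw [abs_mul, abs_of_nonneg hc0]
    have hcast : ((n - 1 : ℕ) : ℝ) = (n : ℝ) - 1 := by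
      have := Nat.cast_sub hn (R := ℝ); simpa using this
    have hmul : (n : ℝ) * (1 - r n / n) ≤ ((n - 1 : ℕ) : ℝ) := by
      rw [hcast, mul_sub, mul_div_cancel₀ _ (ne_of_gt hn0)]
      linarith
    calc (n : ℝ) * |y n| ≤ (n : ℝ) * ((1 - r n / n) * |y (n - 1)| + |ε n|) := by
          exact mul_le_mul_of_nonneg_left habs (le_of_lt hn0)
      _ = ((n : ℝ) * (1 - r n / n)) * |y (n - 1)| + (n : ℝ) * |ε n| := by ring
      _ ≤ ((n - 1 : ℕ) : ℝ) * |y (n - 1)| + (n : ℝ) * |ε n| := by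
          have := mul_le_mul_of_nonneg_right hmul (abs_nonneg (y (n - 1)))
          linarith
  set C : ℝ := ((n₀ - 1 : ℕ) : ℝ) * |y (n₀ - 1)| with hC
  -- Step 2: induction
  have main : ∀ n : ℕ, n₀ ≤ n →
      (n : ℝ) * |y n| ≤ C + M * ∑ j ∈ Finset.Icc n₀ n, Real.log j ^ k / j := by
    intro n hn
    induction n, hn using Nat.le_induction with
    | base =>
      have h1 : 1 ≤ n₀ := le_trans (by norm_num) hn₀
      have hn0R : (0 : ℝ) < n₀ := by exact_mod_cast h1
      have := key n₀ h1
      have hε0 := hε n₀ le_rfl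
      have hsum : ∑ j ∈ Finset.Icc n₀ n₀, Real.log j ^ k / j
          = Real.log n₀ ^ k / n₀ := by simp
      rw [hsum]
      have hne : (n₀ : ℝ) * (M * Real.log n₀ ^ k / (n₀ : ℝ) ^ 2)
          = M * (Real.log n₀ ^ k / n₀) := by
        field_simp
      have h2 : (n₀ : ℝ) * |ε n₀| ≤ M * (Real.log n₀ ^ k / n₀) := by
        rw [← hne]
        exact mul_le_mul_of_nonneg_left hε0 (le_of_lt hn0R)
      linarith
    | succ n hn ih =>
      have h1 : 1 ≤ n + 1 := Nat.le_add_left 1 n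
      have h := key (n + 1) h1
      simp only [Nat.add_sub_cancel] at h
      have hs : ∑ j ∈ Finset.Icc n₀ (n + 1), Real.log j ^ k / j
          = (∑ j ∈ Finset.Icc n₀ n, Real.log j ^ k / j)
            + Real.log ((n + 1 : ℕ) : ℝ) ^ k / ((n + 1 : ℕ) : ℝ) := by
        rw [Finset.sum_Icc_succ_top (le_trans hn (Nat.le_succ n))]
      have hn1R : (0 : ℝ) < ((n + 1 : ℕ) : ℝ) := by positivity
      have hε1 := hε (n + 1) (le_trans hn (Nat.le_succ n))
      have h2 : ((n + 1 : ℕ) : ℝ) * |ε (n + 1)|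
          ≤ M * (Real.log ((n + 1 : ℕ) : ℝ) ^ k / ((n + 1 : ℕ) : ℝ)) := by
        have := mul_le_mul_of_nonneg_left hε1 (le_of_lt hn1R)
        calc ((n + 1 : ℕ) : ℝ) * |ε (n + 1)|
            ≤ ((n + 1 : ℕ) : ℝ) * (M * Real.log ((n + 1 : ℕ) : ℝ) ^ k / ((n + 1 : ℕ) : ℝ) ^ 2) :=
              this
          _ = M * (Real.log ((n + 1 : ℕ) : ℝ) ^ k / ((n + 1 : ℕ) : ℝ)) := by
              field_simp
      rw [hs]
      linarith
  -- Step 3: bound the sum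
  have sumbd : ∀ n : ℕ, n₀ ≤ n →
      ∑ j ∈ Finset.Icc n₀ n, Real.log j ^ k / j ≤ Real.log n ^ (k + 1) := by
    intro n hn
    have h2n : 2 ≤ n := le_trans hn₀ hn
    have hlogn : 0 ≤ Real.log n := Real.log_nonneg (by exact_mod_cast le_trans one_le_two h2n)
    calc ∑ j ∈ Finset.Icc n₀ n, Real.log j ^ k / j
        ≤ ∑ j ∈ Finset.Icc n₀ n, Real.log n ^ k * (1 / j) := by
          apply Finset.sum_le_sum
          intro j hj
          simp only [Finset.mem_Icc] at hj
          have hj2 : 2 ≤ j := le_trans hn₀ hj.1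
          have hjR : (0 : ℝ) < j := by positivity
          have hlogj : 0 ≤ Real.log j :=
            Real.log_nonneg (by exact_mod_cast le_trans one_le_two hj2)
          have : Real.log j ^ k ≤ Real.log n ^ k :=
            pow_le_pow_left₀ hlogj (Real.log_le_log (by positivity) (by exact_mod_cast hj.2)) k
          rw [div_eq_mul_one_div]
          exact mul_le_mul_of_nonneg_right this (by positivity)
      _ = Real.log n ^ k * ∑ j ∈ Finset.Icc n₀ n, (1 : ℝ) / j := by
          rw [Finset.mul_sum]
      _ ≤ Real.log n ^ k * ∑ j ∈ Finset.Icc 2 n, (1 : ℝ) / j := by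
          apply mul_le_mul_of_nonneg_left _ (by positivity)
          apply Finset.sum_le_sum_of_subset_of_nonneg
          · exact Finset.Icc_subset_Icc_left hn₀
          · intro j _ _; positivity
      _ ≤ Real.log n ^ k * Real.log n := by
          exact mul_le_mul_of_nonneg_left
            (sum_inv_le_log n (le_trans one_le_two h2n)) (by positivity)
      _ = Real.log n ^ (k + 1) := by ring
  -- Step 4: conclude
  have hlog2 : (0 : ℝ) < Real.log 2 := Real.log_pos one_lt_two
  set D : ℝ := |C| + 1 with hD
  have hD0 : 0 < D := by positivity
  refine ⟨M + D / Real.log 2 ^ (k + 1), by positivity, n₀, hn₀, ?_⟩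
  intro n hn
  have h2n : 2 ≤ n := le_trans hn₀ hn
  have hnR : (0 : ℝ) < n := by positivity
  have hlogn : Real.log 2 ≤ Real.log n :=
    Real.log_le_log (by norm_num) (by exact_mod_cast h2n)
  have hln0 : 0 < Real.log n := lt_of_lt_of_le hlog2 hlogn
  have hCle : C ≤ D / Real.log 2 ^ (k + 1) * Real.log n ^ (k + 1) := by
    have h1 : (1 : ℝ) ≤ (Real.log n / Real.log 2) ^ (k + 1) :=
      one_le_pow₀ ((one_le_div hlog2).mpr hlogn)
    have : D / Real.log 2 ^ (k + 1) * Real.log n ^ (k + 1)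
        = D * (Real.log n / Real.log 2) ^ (k + 1) := by
      rw [div_pow]; ring
    rw [this]
    calc C ≤ |C| := le_abs_self C
      _ = |C| * 1 := (mul_one _).symm
      _ ≤ D * (Real.log n / Real.log 2) ^ (k + 1) :=
          mul_le_mul (by rw [hD]; linarith) h1 zero_le_one (le_of_lt hD0)
  have hmain := main n hn
  have hsum := sumbd n hn
  have hfinal : (n : ℝ) * |y n|
      ≤ (M + D / Real.log 2 ^ (k + 1)) * Real.log n ^ (k + 1) := by
    have : M * ∑ j ∈ Finset.Icc n₀ n, Real.log j ^ k / j
        ≤ M * Real.log n ^ (k + 1) := mul_le_mul_of_nonneg_left hsum (le_of_lt hM)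
    nlinarith
  rw [le_div_iff₀ hnR]
  calc |y n| * n = (n : ℝ) * |y n| := mul_comm _ _
    _ ≤ (M + D / Real.log 2 ^ (k + 1)) * Real.log n ^ (k + 1) := hfinal
end

section
/- Revenue maximization is equivalent to cumulative aggregated utility maximization (Theorem 2). Let 𝒮 be a nonempty set of nonempty Finsets of Fin N such that Σ_{i∈S} ξ_i equals one and the same constant c for every S ∈ 𝒮 (as holds for option sets induced by partitions of a common item set when a bundle's salvage value equals the sum of its items' salvage values). For S ∈ 𝒮, t ≥ 1, ω ∈ Ω, set Δ_iV_t(S) = V_{t−1}(S) − V_{t−1}(S∖{i}); let Γ_t^ω(S) ≥ 0 satisfy Γ_t^ω(S)·exp(Γ_t^ω(S)) = Σ_{i∈S} exp(q_i(ω)+β·Δ_iV_t(S)−1); define optimal prices p*_{t,i,ω}(S) = Δ_iV_t(S) − (1+Γ_t^ω(S))/β, optimal utilities u*_{t,i,ω}(S) = q_i(ω) + β·p*_{t,i,ω}(S), and the cumulative aggregated utility U_T(S) = ln( Σ_{t=1}^T Σ_{i∈S} E_X[exp(u*_{t,i,X}(S))] ). Then for every integer T ≥ 1, { S ∈ 𝒮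 : ∀ S' ∈ 𝒮, V_T(S') ≤ V_T(S) } = { S ∈ 𝒮 : ∀ S' ∈ 𝒮, U_T(S') ≤ U_T(S) }. -/
lemma key_ineq (u y : ℝ) : -Real.exp (y - 1) ≤ Real.exp u * (u - y) := by
  have h := Real.add_one_le_exp (-(u - y + 1))
  have hm : Real.exp (y - 1) = Real.exp u * Real.exp (-(u - y + 1)) := by
    rw [← Real.exp_add]; ring_nf
  nlinarith [Real.exp_pos u]

lemma sum_exp_shift {ι : Type*} (S : Finset ι) (a : ι → ℝ) (Γ : ℝ)
    (h : Γ * Real.exp Γ = ∑ i ∈ S, Real.exp (a i)) :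
    ∑ i ∈ S, Real.exp (a i - Γ) = Γ := by
  have : ∀ i ∈ S, Real.exp (a i - Γ) = Real.exp (a i) * Real.exp (-Γ) := by
    intro i _; rw [← Real.exp_add]; ring_nf
  rw [Finset.sum_congr rfl this, ← Finset.sum_mul, ← h, mul_assoc, ← Real.exp_add]
  simp

lemma sup_rev {N : ℕ} (S : Finset (Fin N)) (hS : S.Nonempty)
    (qv : Fin N → ℝ) (β : ℝ) (hβ : β < 0) (Δ : Fin N → ℝ) (Γ : ℝ) (hΓ0 : 0 ≤ Γ)
    (hΓ : Γ * Real.exp Γ = ∑ i ∈ S, Real.exp (qv i + β * Δ i - 1)) :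
    (⨆ p : Fin N → ℝ, ∑ i ∈ S,
       (Real.exp (qv i + β * p i) / (1 + ∑ j ∈ S, Real.exp (qv j + β * p j))) * (p i - Δ i))
      = -Γ / β := by
  have hβne : β ≠ 0 := hβ.ne
  -- upper bound
  have hub : ∀ p : Fin N → ℝ, (∑ i ∈ S,
      (Real.exp (qv i + β * p i) / (1 + ∑ j ∈ S, Real.exp (qv j + β * p j))) * (p i - Δ i))
      ≤ -Γ / β := by
    intro p
    set D := 1 + ∑ j ∈ S, Real.exp (qv j + β * p j) with hD
    have hDpos : 0 < D := by
      have : 0 ≤ ∑ j ∈ S, Real.exp (qv j + β * p j) :=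
        Finset.sum_nonneg fun j _ => (Real.exp_pos _).le
      linarith
    have hterm : ∀ i ∈ S,
        -Real.exp ((qv i + β * Δ i - 1) - Γ)
          ≤ Real.exp (qv i + β * p i) * (β * (p i - Δ i) + Γ) := by
      intro i _
      have := key_ineq (qv i + β * p i) (qv i + β * Δ i - Γ)
      have e1 : (qv i + β * Δ i - Γ) - 1 = (qv i + β * Δ i - 1) - Γ := by ring
      have e2 : (qv i + β * p i) - (qv i + β * Δ i - Γ) = β * (p i - Δ i) + Γ := by ring
      rw [e1, e2] at this
      exact this
    have hsum1 : -Γ ≤ ∑ i ∈ S, Real.exp (qv i + β * p i) * (β * (p i - Δ i) + Γ) := by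
      have := Finset.sum_le_sum hterm
      have hL : ∑ i ∈ S, -Real.exp ((qv i + β * Δ i - 1) - Γ) = -Γ := by
        rw [Finset.sum_neg_distrib, sum_exp_shift S _ Γ hΓ]
      linarith [hL ▸ this]
    have hsum2 : -Γ * D ≤ ∑ i ∈ S, Real.exp (qv i + β * p i) * (β * (p i - Δ i)) := by
      have hexp : ∑ i ∈ S, Real.exp (qv i + β * p i) * (β * (p i - Δ i) + Γ)
          = (∑ i ∈ S, Real.exp (qv i + β * p i) * (β * (p i - Δ i)))
            + Γ * (∑ j ∈ S, Real.exp (qv j + β * p j)) := by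
        rw [Finset.mul_sum, ← Finset.sum_add_distrib]
        exact Finset.sum_congr rfl fun i _ => by ring
      rw [hexp] at hsum1
      have : D = 1 + ∑ j ∈ S, Real.exp (qv j + β * p j) := hD
      nlinarith
    have hmul : β * ∑ i ∈ S, (Real.exp (qv i + β * p i)) * (p i - Δ i)
        = ∑ i ∈ S, Real.exp (qv i + β * p i) * (β * (p i - Δ i)) := by
      rw [Finset.mul_sum]; exact Finset.sum_congr rfl fun i _ => by ring
    have hsum3 : ∑ i ∈ S, Real.exp (qv i + β * p i) * (p i - Δ i) ≤ (-Γ / β) * D := by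
      rw [div_mul_eq_mul_div, le_div_iff_of_neg hβ]
      calc (-Γ) * D ≤ β * ∑ i ∈ S, Real.exp (qv i + β * p i) * (p i - Δ i) := by
            rw [hmul]; linarith [hsum2]
        _ = (∑ i ∈ S, Real.exp (qv i + β * p i) * (p i - Δ i)) * β := by ring
    calc ∑ i ∈ S, (Real.exp (qv i + β * p i) / D) * (p i - Δ i)
        = (∑ i ∈ S, Real.exp (qv i + β * p i) * (p i - Δ i)) / D := by
          rw [Finset.sum_div]; exact Finset.sum_congr rfl fun i _ => by ring
      _ ≤ ((-Γ / β) * D) / D := by gcongr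
      _ = -Γ / β := by field_simp
  -- value attained at p*
  set pst : Fin N → ℝ := fun i => Δ i - (1 + Γ) / β with hpst
  have hx : ∀ i, Real.exp (qv i + β * pst i) = Real.exp ((qv i + β * Δ i - 1) - Γ) := by
    intro i
    congr 1
    rw [hpst]
    field_simp
    ring
  have hsumx : ∑ j ∈ S, Real.exp (qv j + β * pst j) = Γ := by
    rw [Finset.sum_congr rfl fun j _ => hx j]
    exact sum_exp_shift S _ Γ hΓ
  have hval : (∑ i ∈ S,
      (Real.exp (qv i + β * pst i) / (1 + ∑ j ∈ S, Real.exp (qv j + β * pst j))) * (pst i - Δ i))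
      = -Γ / β := by
    rw [hsumx]
    have h1Γ : (0 : ℝ) < 1 + Γ := by linarith
    have hterm : ∀ i ∈ S, (Real.exp (qv i + β * pst i) / (1 + Γ)) * (pst i - Δ i)
        = Real.exp ((qv i + β * Δ i - 1) - Γ) * (-(1/β)) := by
      intro i _
      rw [hx i]
      have hp : pst i - Δ i = -(1 + Γ)/β := by rw [hpst]; ring
      rw [hp]
      field_simp
    rw [Finset.sum_congr rfl hterm, ← Finset.sum_mul, sum_exp_shift S _ Γ hΓ]
    ring
  have hbdd : BddAbove (Set.range fun p : Fin N → ℝ => ∑ i ∈ S,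
      (Real.exp (qv i + β * p i) / (1 + ∑ j ∈ S, Real.exp (qv j + β * p j))) * (p i - Δ i)) :=
    ⟨-Γ / β, by rintro x ⟨p, rfl⟩; exact hub p⟩
  refine le_antisymm (ciSup_le hub) ?_
  calc -Γ / β = _ := hval.symm
    _ ≤ _ := le_ciSup hbdd pst



/-- Revenue maximization is equivalent to cumulative aggregated utility
maximization (Theorem 2): over a family `𝒮` of option sets with a common
salvage-value sum, the maximizers of `V_T` and of `U_T` coincide. -/
theorem stmt_8 {Ω : Type*} [Fintype Ω] [Nonempty Ω]
    (pX : Ω → ℝ) (hpX : ∀ ω, 0 ≤ pX ω) (hpX1 : ∑ ω, pX ω = 1)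
    (N : ℕ) (hN : 1 ≤ N)
    (q : Fin N → Ω → ℝ) (ξ : Fin N → ℝ)
    (β : ℝ) (hβ : β < 0)
    (μ : ℝ) (hμ0 : 0 < μ) (hμ1 : μ ≤ 1)
    (V : ℕ → Finset (Fin N) → ℝ)
    (hV0 : ∀ S : Finset (Fin N), V 0 S = ∑ i ∈ S, ξ i)
    (hV : ∀ t : ℕ, 1 ≤ t → ∀ S : Finset (Fin N),
      V t S = V (t - 1) S + μ * ∑ ω, pX ω *
        (⨆ p : Fin N → ℝ, ∑ i ∈ S,
          (Real.exp (q i ω + β * p i) / (1 + ∑ j ∈ S, Real.exp (q j ω + β * p j))) *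
            (p i - (V (t - 1) S - V (t - 1) (S.erase i)))))
    (𝒮 : Set (Finset (Fin N))) (h𝒮ne : 𝒮.Nonempty)
    (h𝒮 : ∀ S ∈ 𝒮, S.Nonempty)
    (c : ℝ) (hc : ∀ S ∈ 𝒮, ∑ i ∈ S, ξ i = c)
    (Γ : Finset (Fin N) → ℕ → Ω → ℝ)
    (hΓ0 : ∀ S ∈ 𝒮, ∀ t : ℕ, 1 ≤ t → ∀ ω, 0 ≤ Γ S t ω)
    (hΓ : ∀ S ∈ 𝒮, ∀ t : ℕ, 1 ≤ t → ∀ ω,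
      Γ S t ω * Real.exp (Γ S t ω) =
        ∑ i ∈ S, Real.exp (q i ω + β * (V (t - 1) S - V (t - 1) (S.erase i)) - 1))
    (pstar : Finset (Fin N) → ℕ → Fin N → Ω → ℝ)
    (hpstar : ∀ S ∈ 𝒮, ∀ t : ℕ, 1 ≤ t → ∀ i ω,
      pstar S t i ω = (V (t - 1) S - V (t - 1) (S.erase i)) - (1 + Γ S t ω) / β)
    (U : Finset (Fin N) → ℕ → ℝ)
    (hU : ∀ S ∈ 𝒮, ∀ T : ℕ, 1 ≤ T →
      U S T = Real.log (∑ t ∈ Finset.Icc 1 T, ∑ i ∈ S,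
        ∑ ω, pX ω * Real.exp (q i ω + β * pstar S t i ω))) :
    ∀ T : ℕ, 1 ≤ T →
      {S | S ∈ 𝒮 ∧ ∀ S' ∈ 𝒮, V T S' ≤ V T S} =
      {S | S ∈ 𝒮 ∧ ∀ S' ∈ 𝒮, U S' T ≤ U S T} := by
  have hβne : β ≠ 0 := hβ.ne
  -- Γ is strictly positive
  have hΓpos : ∀ S ∈ 𝒮, ∀ t : ℕ, 1 ≤ t → ∀ ω, 0 < Γ S t ω := by
    intro S hS t ht ω
    have h := hΓ S hS t ht ω
    have hpos : 0 < Γ S t ω * Real.exp (Γ S t ω) := by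
      rw [h]
      exact Finset.sum_pos (fun i _ => Real.exp_pos _) (h𝒮 S hS)
    rcases (hΓ0 S hS t ht ω).lt_or_eq with h' | h'
    · exact h'
    · rw [← h'] at hpos; simp at hpos
  -- aggregated utility quantity
  set A : Finset (Fin N) → ℕ → ℝ :=
    fun S T => ∑ t ∈ Finset.Icc 1 T, ∑ ω, pX ω * Γ S t ω with hA
  -- positivity of A
  obtain ⟨ω₀, hω₀⟩ : ∃ ω, 0 < pX ω := by
    by_contra h
    push_neg at h
    have hz : ∀ ω, pX ω = 0 := fun ω => le_antisymm (h ω) (hpX ω)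
    simp [hz] at hpX1
  have hApos : ∀ S ∈ 𝒮, ∀ T : ℕ, 1 ≤ T → 0 < A S T := by
    intro S hS T hT
    apply Finset.sum_pos
    · intro t ht
      have ht1 : 1 ≤ t := (Finset.mem_Icc.mp ht).1
      apply Finset.sum_pos'
      · intro ω _
        exact mul_nonneg (hpX ω) (hΓpos S hS t ht1 ω).le
      · exact ⟨ω₀, Finset.mem_univ _, mul_pos hω₀ (hΓpos S hS t ht1 ω₀)⟩
    · exact Finset.nonempty_Icc.mpr hT
  -- closed form for V
  have hVf : ∀ S ∈ 𝒮, ∀ T : ℕ, V T S = c + (μ * (-1 / β)) * A S T := by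
    intro S hS T
    induction T with
    | zero => simp [hV0, hc S hS, hA]
    | succ T ih =>
      have h1 : (1 : ℕ) ≤ T + 1 := Nat.le_add_left 1 T
      have hrec := hV (T + 1) h1 S
      simp only [Nat.add_sub_cancel] at hrec
      have hsup : ∀ ω, (⨆ p : Fin N → ℝ, ∑ i ∈ S,
          (Real.exp (q i ω + β * p i) / (1 + ∑ j ∈ S, Real.exp (q j ω + β * p j))) *
            (p i - (V T S - V T (S.erase i)))) = -(Γ S (T + 1) ω) / β := by
        intro ω
        have hg := hΓ S hS (T + 1) h1 ω
        simp only [Nat.add_sub_cancel] at hg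
        exact sup_rev S (h𝒮 S hS) (fun i => q i ω) β hβ
          (fun i => V T S - V T (S.erase i)) (Γ S (T + 1) ω)
          (hΓ0 S hS (T + 1) h1 ω) hg
      have hAstep : A S (T + 1) = A S T + ∑ ω, pX ω * Γ S (T + 1) ω := by
        rw [hA]
        exact Finset.sum_Icc_succ_top h1 _
      have hSm : ∑ ω, pX ω * (-(Γ S (T + 1) ω) / β)
          = (-1 / β) * ∑ ω, pX ω * Γ S (T + 1) ω := by
        rw [Finset.mul_sum]
        exact Finset.sum_congr rfl fun ω _ => by ring
      rw [hrec]
      simp only [hsup]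
      rw [ih, hAstep, hSm]
      ring
  -- closed form for U
  have hUf : ∀ S ∈ 𝒮, ∀ T : ℕ, 1 ≤ T → U S T = Real.log (A S T) := by
    intro S hS T hT
    rw [hU S hS T hT]
    congr 1
    apply Finset.sum_congr rfl
    intro t ht
    have ht1 : 1 ≤ t := (Finset.mem_Icc.mp ht).1
    have hterm : ∀ i ∈ S, ∀ ω, Real.exp (q i ω + β * pstar S t i ω)
        = Real.exp ((q i ω + β * (V (t - 1) S - V (t - 1) (S.erase i)) - 1) - Γ S t ω) := by
      intro i _ ω
      rw [hpstar S hS t ht1 i ω]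
      congr 1
      field_simp
      ring
    rw [Finset.sum_comm]
    apply Finset.sum_congr rfl
    intro ω _
    rw [← Finset.mul_sum]
    congr 1
    rw [Finset.sum_congr rfl (fun i hi => hterm i hi ω)]
    exact sum_exp_shift S _ _ (hΓ S hS t ht1 ω)
  -- the equivalence
  intro T hT
  have hiff : ∀ S ∈ 𝒮, ∀ S' ∈ 𝒮, (V T S' ≤ V T S ↔ U S' T ≤ U S T) := by
    intro S hS S' hS'
    rw [hVf S hS T, hVf S' hS' T, hUf S hS T hT, hUf S' hS' T hT,
      Real.log_le_log_iff (hApos S' hS' T hT) (hApos S hS T hT)]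
    have hk : 0 < μ * (-1 / β) := by
      apply mul_pos hμ0
      apply div_pos_of_neg_of_neg (by norm_num) hβ
    constructor
    · intro h
      have := (add_le_add_iff_left c).mp h
      exact (mul_le_mul_iff_right₀ hk).mp this
    · intro h
      exact (add_le_add_iff_left c).mpr ((mul_le_mul_iff_right₀ hk).mpr h)
  ext S
  simp only [Set.mem_setOf_eq]
  constructor
  · rintro ⟨hS, h⟩
    exact ⟨hS, fun S' hS' => (hiff S hS S' hS').mp (h S' hS')⟩
  · rintro ⟨hS, h⟩
    exact ⟨hS, fun S' hS' => (hiff S hS S' hS').mpr (h S' hS')⟩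
end

section
/- Monotonicity of the backward-upper-bound price trajectory (Proposition 2). With r as in the context, for each t ∈ ℕ, i ∈ Fin N and ω ∈ Ω let Γ_{t,i}^ω ≥ 0 satisfy Γ_{t,i}^ω·exp(Γ_{t,i}^ω) = exp(q_i(ω) + β·r_{t,i} − 1), and define the homogeneous price trajectory τ^U_{t,i} = max_{ω∈Ω} ( r_{t,i} − (1 + Γ_{t,i}^ω)/β ). Then for every i ∈ Fin N: (a) the sequence t ↦ r_{t,i} is non-decreasing; (b) the sequence t ↦ τ^U_{t,i} is non-decreasing (i.e., the price trajectory is non-increasing as the time-to-go t decreases). -/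
/-- Monotonicity of the backward-upper-bound price trajectory (Proposition 2):
the individual upper bounds `r_{t,i}` are non-decreasing in `t`, and so is the
homogeneous price trajectory `τ^U_{t,i} = max_ω (r_{t,i} − (1 + Γ_{t,i}^ω)/β)`. -/
theorem stmt_10 {Ω : Type*} [Fintype Ω] [Nonempty Ω]
    (pX : Ω → ℝ) (hpX : ∀ ω, 0 ≤ pX ω) (hpX1 : ∑ ω, pX ω = 1)
    (N : ℕ) (hN : 1 ≤ N)
    (q : Fin N → Ω → ℝ) (ξ : Fin N → ℝ)
    (β : ℝ) (hβ : β < 0)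
    (μ : ℝ) (hμ0 : 0 < μ) (hμ1 : μ ≤ 1)
    (r : ℕ → Fin N → ℝ)
    (hr0 : ∀ i, r 0 i = ξ i)
    (hr : ∀ t : ℕ, 1 ≤ t → ∀ i,
      r t i = r (t - 1) i + μ * ∑ ω, pX ω *
        (⨆ p : ℝ, (Real.exp (q i ω + β * p) / (1 + Real.exp (q i ω + β * p))) *
          (p - r (t - 1) i)))
    (Γ : ℕ → Fin N → Ω → ℝ)
    (hΓ0 : ∀ t i ω, 0 ≤ Γ t i ω)
    (hΓ : ∀ t i ω, Γ t i ω * Real.exp (Γ t i ω) = Real.exp (q i ω + β * r t i - 1))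
    (τ : ℕ → Fin N → ℝ)
    (hτ : ∀ t i, τ t i = ⨆ ω : Ω, (r t i - (1 + Γ t i ω) / β)) :
    ∀ i : Fin N,
      Monotone (fun t : ℕ => r t i) ∧ Monotone (fun t : ℕ => τ t i) := by

  intro i
  -- (a) monotonicity of r
  have hrmono : Monotone (fun t : ℕ => r t i) := by
    apply monotone_nat_of_le_succ
    intro t
    have h1 : r (t + 1) i = r t i + μ * ∑ ω, pX ω *
        (⨆ p : ℝ, (Real.exp (q i ω + β * p) / (1 + Real.exp (q i ω + β * p))) *
          (p - r t i)) := by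
      have := hr (t + 1) (by omega) i
      simpa using this
    have hsum : 0 ≤ ∑ ω, pX ω *
        (⨆ p : ℝ, (Real.exp (q i ω + β * p) / (1 + Real.exp (q i ω + β * p))) *
          (p - r t i)) := by
      apply Finset.sum_nonneg
      intro ω _
      apply mul_nonneg (hpX ω)
      by_cases hb : BddAbove (Set.range fun p : ℝ =>
          (Real.exp (q i ω + β * p) / (1 + Real.exp (q i ω + β * p))) * (p - r t i))
      · have := le_ciSup hb (r t i)
        simpa using this
      · rw [Real.iSup_of_not_bddAbove hb]
    have : 0 ≤ μ * ∑ ω, pX ω *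
        (⨆ p : ℝ, (Real.exp (q i ω + β * p) / (1 + Real.exp (q i ω + β * p))) *
          (p - r t i)) := mul_nonneg hμ0.le hsum
    show r t i ≤ r (t + 1) i
    linarith [h1]
  refine ⟨hrmono, ?_⟩
  -- Γ is positive
  have hΓpos : ∀ t ω, 0 < Γ t i ω := by
    intro t ω
    rcases (hΓ0 t i ω).lt_or_eq with h | h
    · exact h
    · exfalso
      have heq := hΓ t i ω
      rw [← h] at heq
      simp at heq
      exact (Real.exp_pos _).ne' heq.symm
  -- log equation
  have hlog : ∀ t ω, Real.log (Γ t i ω) + Γ t i ω = q i ω + β * r t i - 1 := by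
    intro t ω
    have heq := hΓ t i ω
    have := congrArg Real.log heq
    rwa [Real.log_mul (hΓpos t ω).ne' (Real.exp_ne_zero _), Real.log_exp,
      Real.log_exp] at this
  -- key pointwise inequality
  have key : ∀ ω : Ω, ∀ t s : ℕ, t ≤ s →
      r t i - (1 + Γ t i ω) / β ≤ r s i - (1 + Γ s i ω) / β := by
    intro ω t s hts
    have hrts : r t i ≤ r s i := hrmono hts
    set a := Γ t i ω with ha
    set b := Γ s i ω with hb
    have hbe : b * Real.exp b ≤ a * Real.exp a := by
      rw [hΓ t i ω, hΓ s i ω]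
      exact Real.exp_le_exp.mpr (by nlinarith)
    have hba : b ≤ a := by
      by_contra h
      push_neg at h
      have h1 : Real.exp a < Real.exp b := Real.exp_lt_exp.mpr h
      nlinarith [hΓpos t ω, hΓpos s ω, Real.exp_pos a, Real.exp_pos b]
    have hlogba : Real.log b ≤ Real.log a := Real.log_le_log (hΓpos s ω) hba
    have hkey : a - b ≤ (-β) * (r s i - r t i) := by
      have e1 := hlog t ω
      have e2 := hlog s ω
      nlinarith
    have hβ' : 0 < -β := by linarith
    have hdiv : (a - b) / (-β) ≤ r s i - r t i := by
      rw [div_le_iff₀ hβ']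
      nlinarith
    have hring : (1 + a) / β - (1 + b) / β = -((a - b) / (-β)) := by
      ring
    linarith
  -- (b) monotonicity of τ
  intro t s hts
  simp only
  rw [hτ t i, hτ s i]
  apply ciSup_mono
  · exact (Set.finite_range _).bddAbove
  · intro ω
    exact key ω t s hts
end

section
/- Backward lower bound (Appendix Proposition, MNL case). Let S̄ = Fin N. Define l : ℕ → Fin N → ℝ by l_{0,i} = ξ_i and, for t ≥ 1: for each ω ∈ Ω let Γ_t^ω ≥ 0 satisfy Γ_t^ω·exp(Γ_t^ω) = Σ_{j∈Fin N} exp(q_j(ω) + β·l_{t−1,j} − 1), set p̂_{t,i}^ω = l_{t−1,i} − (1 + Γ_t^ω)/β, and l_{t,i} = l_{t−1,i} + μ·E_X[ ρ_i^X(p̂_t^X, S̄)·(p̂_{t,i}^X − l_{t−1,i}) ]. Then for every t ∈ ℕ and every Finset S ⊆ Fin N, Σ_{i∈S} l_{t,i} ≤ V_t(S). -/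
/-- The classical inequality `u * exp u ≥ -1/e`. -/
lemma stmt_13_aux_ue (u : ℝ) : -Real.exp (-1) ≤ u * Real.exp u := by
  have h := Real.add_one_le_exp (-u - 1)
  have h3 : Real.exp (-u - 1) * Real.exp u = Real.exp (-1) := by
    rw [← Real.exp_add]; ring_nf
  nlinarith [Real.exp_pos u, mul_le_mul_of_nonneg_right h (Real.exp_pos u).le]

/-- Backward lower bound (Appendix Proposition, MNL case): the worst-case
recursion `l` yields `Σ_{i∈S} l_{t,i} ≤ V_t(S)` for every subset `S`. -/
theorem stmt_13 {Ω : Type*} [Fintype Ω] [Nonempty Ω]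
    (pX : Ω → ℝ) (hpX : ∀ ω, 0 ≤ pX ω) (hpX1 : ∑ ω, pX ω = 1)
    (N : ℕ) (hN : 1 ≤ N)
    (q : Fin N → Ω → ℝ) (ξ : Fin N → ℝ)
    (β : ℝ) (hβ : β < 0)
    (μ : ℝ) (hμ0 : 0 < μ) (hμ1 : μ ≤ 1)
    (V : ℕ → Finset (Fin N) → ℝ)
    (hV0 : ∀ S : Finset (Fin N), V 0 S = ∑ i ∈ S, ξ i)
    (hV : ∀ t : ℕ, 1 ≤ t → ∀ S : Finset (Fin N),
      V t S = V (t - 1) S + μ * ∑ ω, pX ω *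
        (⨆ p : Fin N → ℝ, ∑ i ∈ S,
          (Real.exp (q i ω + β * p i) / (1 + ∑ j ∈ S, Real.exp (q j ω + β * p j))) *
            (p i - (V (t - 1) S - V (t - 1) (S.erase i)))))
    (l : ℕ → Fin N → ℝ)
    (hl0 : ∀ i, l 0 i = ξ i)
    (Γ : ℕ → Ω → ℝ)
    (hΓ0 : ∀ t : ℕ, 1 ≤ t → ∀ ω, 0 ≤ Γ t ω)
    (hΓ : ∀ t : ℕ, 1 ≤ t → ∀ ω,
      Γ t ω * Real.exp (Γ t ω) = ∑ j, Real.exp (q j ω + β * l (t - 1) j - 1))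
    (phat : ℕ → Ω → Fin N → ℝ)
    (hphat : ∀ t : ℕ, 1 ≤ t → ∀ ω i,
      phat t ω i = l (t - 1) i - (1 + Γ t ω) / β)
    (hl : ∀ t : ℕ, 1 ≤ t → ∀ i,
      l t i = l (t - 1) i + μ * ∑ ω, pX ω *
        ((Real.exp (q i ω + β * phat t ω i) /
          (1 + ∑ j, Real.exp (q j ω + β * phat t ω j))) *
            (phat t ω i - l (t - 1) i))) :
    ∀ t : ℕ, ∀ S : Finset (Fin N), (∑ i ∈ S, l t i) ≤ V t S := by
  intro t
  induction t with
  | zero =>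
    intro S
    rw [hV0]
    exact le_of_eq (Finset.sum_congr rfl fun i _ => hl0 i)
  | succ t IH =>
    intro S
    have ht1 : 1 ≤ t + 1 := Nat.succ_le_succ (Nat.zero_le t)
    have hβ' : (0:ℝ) < -β := by linarith
    have hβ0 : β ≠ 0 := ne_of_lt hβ
    set D := V t S - ∑ i ∈ S, l t i with hDdef
    have hD : 0 ≤ D := sub_nonneg.2 (IH S)
    have hG' : ∀ ω, 0 ≤ Γ (t+1) ω := hΓ0 (t+1) ht1
    set c : Ω → ℝ := fun ω => (1 + Γ (t+1) ω) / (-β) with hcdef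
    have hc : ∀ ω, 0 < c ω := by
      intro ω
      simp only [hcdef]
      exact div_pos (by linarith [hG' ω]) hβ'
    have hphat' : ∀ ω i, phat (t+1) ω i = l t i + c ω := by
      intro ω i
      rw [hphat (t+1) ht1 ω i]
      simp only [Nat.add_sub_cancel, hcdef, div_neg]
      ring
    have hβc : ∀ ω, β * c ω = -(1 + Γ (t+1) ω) := by
      intro ω
      simp only [hcdef]
      field_simp
    have hwfull : ∀ ω, ∑ j, Real.exp (q j ω + β * phat (t+1) ω j) = Γ (t+1) ω := by
      intro ω
      have h1 : ∀ j, Real.exp (q j ω + β * phat (t+1) ω j)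
          = Real.exp (q j ω + β * l t j - 1) * Real.exp (-Γ (t+1) ω) := by
        intro j
        rw [← Real.exp_add, hphat' ω j]
        congr 1
        linear_combination hβc ω
      calc ∑ j, Real.exp (q j ω + β * phat (t+1) ω j)
          = ∑ j, Real.exp (q j ω + β * l t j - 1) * Real.exp (-Γ (t+1) ω) :=
            Finset.sum_congr rfl fun j _ => h1 j
        _ = (∑ j, Real.exp (q j ω + β * l t j - 1)) * Real.exp (-Γ (t+1) ω) := by
            rw [Finset.sum_mul]
        _ = Γ (t+1) ω * Real.exp (Γ (t+1) ω) * Real.exp (-Γ (t+1) ω) := by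
            have h2 := hΓ (t+1) ht1 ω
            simp only [Nat.add_sub_cancel] at h2
            rw [h2]
        _ = Γ (t+1) ω := by
            rw [mul_assoc, ← Real.exp_add, add_neg_cancel, Real.exp_zero, mul_one]
    have hΔ : ∀ i ∈ S, V t S - V t (S.erase i) ≤ D + l t i := by
      intro i hi
      have h1 := IH (S.erase i)
      have h2 : ∑ j ∈ S.erase i, l t j = (∑ j ∈ S, l t j) - l t i :=
        Finset.sum_erase_eq_sub hi
      rw [hDdef]
      linarith
    -- boundedness of the one-period revenue function
    have hbdd : ∀ ω, BddAbove (Set.range fun p : Fin N → ℝ => ∑ i ∈ S,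
        (Real.exp (q i ω + β * p i) / (1 + ∑ j ∈ S, Real.exp (q j ω + β * p j))) *
          (p i - (V t S - V t (S.erase i)))) := by
      intro ω
      refine ⟨∑ i ∈ S, Real.exp (q i ω + β * (V t S - V t (S.erase i)) - 1) / (-β), ?_⟩
      rintro y ⟨p, rfl⟩
      apply Finset.sum_le_sum
      intro i _
      have hden : (1:ℝ) ≤ 1 + ∑ j ∈ S, Real.exp (q j ω + β * p j) := by
        have h0 : 0 ≤ ∑ j ∈ S, Real.exp (q j ω + β * p j) :=
          Finset.sum_nonneg fun j _ => (Real.exp_pos _).le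
        linarith
      have hE : 0 < Real.exp (q i ω + β * p i) := Real.exp_pos _
      rcases le_or_gt (p i - (V t S - V t (S.erase i))) 0 with hm | hm
      · have h1 : Real.exp (q i ω + β * p i) /
            (1 + ∑ j ∈ S, Real.exp (q j ω + β * p j)) *
            (p i - (V t S - V t (S.erase i))) ≤ 0 :=
          mul_nonpos_of_nonneg_of_nonpos (by positivity) hm
        have h2 : 0 ≤ Real.exp (q i ω + β * (V t S - V t (S.erase i)) - 1) / (-β) :=
          div_nonneg (Real.exp_pos _).le hβ'.le
        linarith
      · have h1 : Real.exp (q i ω + β * p i) /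
            (1 + ∑ j ∈ S, Real.exp (q j ω + β * p j)) *
            (p i - (V t S - V t (S.erase i)))
            ≤ Real.exp (q i ω + β * p i) * (p i - (V t S - V t (S.erase i))) := by
          apply mul_le_mul_of_nonneg_right _ hm.le
          exact div_le_self hE.le hden
        have hsplit : Real.exp (q i ω + β * p i)
            = Real.exp (q i ω + β * (V t S - V t (S.erase i)))
              * Real.exp (β * (p i - (V t S - V t (S.erase i)))) := by
          rw [← Real.exp_add]; congr 1; all_goals ring
        have hsplit2 : Real.exp (q i ω + β * (V t S - V t (S.erase i)) - 1)
            = Real.exp (q i ω + β * (V t S - V t (S.erase i))) * Real.exp (-1) := by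
          rw [← Real.exp_add]; congr 1; all_goals ring
        have hk := stmt_13_aux_ue (β * (p i - (V t S - V t (S.erase i))))
        have hk2 := mul_le_mul_of_nonneg_left hk
          (Real.exp_pos (q i ω + β * (V t S - V t (S.erase i)))).le
        have h2 : Real.exp (q i ω + β * p i) * (p i - (V t S - V t (S.erase i)))
            ≤ Real.exp (q i ω + β * (V t S - V t (S.erase i)) - 1) / (-β) := by
          rw [hsplit, hsplit2, le_div_iff₀ hβ']
          nlinarith [hk2]
        linarith
    -- core per-ω inequality
    have hcore : ∀ ω, (∑ i ∈ S, Real.exp (q i ω + β * phat (t+1) ω i)) * c ω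
          / (1 + Γ (t+1) ω)
        ≤ D + ∑ i ∈ S, (Real.exp (q i ω + β * phat (t+1) ω i) /
            (1 + ∑ j ∈ S, Real.exp (q j ω + β * phat (t+1) ω j))) *
              (phat (t+1) ω i - (V t S - V t (S.erase i))) := by
      intro ω
      set Wv := ∑ i ∈ S, Real.exp (q i ω + β * phat (t+1) ω i) with hWv
      have hWv0 : 0 ≤ Wv := Finset.sum_nonneg fun i _ => (Real.exp_pos _).le
      have hWvG : Wv ≤ Γ (t+1) ω := by
        rw [hWv, ← hwfull ω]
        exact Finset.sum_le_sum_of_subset_of_nonneg (Finset.subset_univ S)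
          fun i _ _ => (Real.exp_pos _).le
      have h1W : (0:ℝ) < 1 + Wv := by linarith
      have h1G : (0:ℝ) < 1 + Γ (t+1) ω := by linarith [hG' ω]
      have hFlow : (c ω - D) * (Wv / (1 + Wv)) ≤
          ∑ i ∈ S, (Real.exp (q i ω + β * phat (t+1) ω i) / (1 + Wv)) *
            (phat (t+1) ω i - (V t S - V t (S.erase i))) := by
        have h1 : (c ω - D) * (Wv / (1 + Wv))
            = ∑ i ∈ S, (Real.exp (q i ω + β * phat (t+1) ω i) / (1 + Wv)) * (c ω - D) := by
          rw [← Finset.sum_mul, ← Finset.sum_div, ← hWv]; ring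
        rw [h1]
        apply Finset.sum_le_sum
        intro i hi
        have hE : 0 ≤ Real.exp (q i ω + β * phat (t+1) ω i) / (1 + Wv) :=
          div_nonneg (Real.exp_pos _).le h1W.le
        apply mul_le_mul_of_nonneg_left _ hE
        have h2 := hΔ i hi
        rw [hphat' ω i]
        linarith
      have hstep1 : Wv * c ω / (1 + Γ (t+1) ω) ≤ Wv * c ω / (1 + Wv) := by
        rw [div_le_div_iff₀ h1G h1W]
        nlinarith [mul_nonneg (mul_nonneg hWv0 (hc ω).le) (sub_nonneg.2 hWvG)]
      have hratio : Wv / (1 + Wv) ≤ 1 := by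
        rw [div_le_one h1W]; linarith
      have hstep2 : Wv * c ω / (1 + Wv) ≤ D + (c ω - D) * (Wv / (1 + Wv)) := by
        have e : Wv * c ω / (1 + Wv)
            = (c ω - D) * (Wv / (1 + Wv)) + D * (Wv / (1 + Wv)) := by ring
        have h3 : D * (Wv / (1 + Wv)) ≤ D :=
          mul_le_of_le_one_right hD hratio
        linarith
      have efold : Wv * c ω / (1 + Γ (t+1) ω) = Wv * c ω / (1 + Γ (t+1) ω) := rfl
      calc Wv * c ω / (1 + Γ (t+1) ω) ≤ Wv * c ω / (1 + Wv) := hstep1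
        _ ≤ D + (c ω - D) * (Wv / (1 + Wv)) := hstep2
        _ ≤ D + ∑ i ∈ S, (Real.exp (q i ω + β * phat (t+1) ω i) / (1 + Wv)) *
              (phat (t+1) ω i - (V t S - V t (S.erase i))) := by linarith [hFlow]
    -- rewrite the l-recursion increment
    have hstep : ∀ i, l (t+1) i = l t i +
        μ * ∑ ω, pX ω * (Real.exp (q i ω + β * phat (t+1) ω i) * c ω / (1 + Γ (t+1) ω)) := by
      intro i
      rw [hl (t+1) ht1 i]
      simp only [Nat.add_sub_cancel]
      congr 2
      apply Finset.sum_congr rfl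
      intro ω _
      have hm : phat (t+1) ω i - l t i = c ω := by
        rw [hphat' ω i]; ring
      rw [hwfull ω, hm]
      ring
    have hLHS : ∑ i ∈ S, l (t+1) i = (∑ i ∈ S, l t i) +
        μ * ∑ ω, pX ω * ((∑ i ∈ S, Real.exp (q i ω + β * phat (t+1) ω i)) * c ω
          / (1 + Γ (t+1) ω)) := by
      calc ∑ i ∈ S, l (t+1) i
          = ∑ i ∈ S, (l t i + μ * ∑ ω, pX ω *
              (Real.exp (q i ω + β * phat (t+1) ω i) * c ω / (1 + Γ (t+1) ω))) :=
            Finset.sum_congr rfl fun i _ => hstep i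
        _ = (∑ i ∈ S, l t i) + ∑ i ∈ S, μ * ∑ ω, pX ω *
              (Real.exp (q i ω + β * phat (t+1) ω i) * c ω / (1 + Γ (t+1) ω)) := by
            rw [Finset.sum_add_distrib]
        _ = (∑ i ∈ S, l t i) + μ * ∑ ω, pX ω *
              ((∑ i ∈ S, Real.exp (q i ω + β * phat (t+1) ω i)) * c ω
                / (1 + Γ (t+1) ω)) := by
            congr 1
            rw [← Finset.mul_sum, Finset.sum_comm]
            congr 1
            apply Finset.sum_congr rfl
            intro ω _
            rw [← Finset.mul_sum, ← Finset.sum_div, ← Finset.sum_mul]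
    -- assemble
    rw [hV (t+1) ht1 S]
    simp only [Nat.add_sub_cancel]
    rw [hLHS]
    have hsup : ∀ ω, (∑ i ∈ S, (Real.exp (q i ω + β * phat (t+1) ω i) /
          (1 + ∑ j ∈ S, Real.exp (q j ω + β * phat (t+1) ω j))) *
            (phat (t+1) ω i - (V t S - V t (S.erase i))))
        ≤ ⨆ p : Fin N → ℝ, ∑ i ∈ S,
            (Real.exp (q i ω + β * p i) / (1 + ∑ j ∈ S, Real.exp (q j ω + β * p j))) *
              (p i - (V t S - V t (S.erase i))) :=
      fun ω => le_ciSup (hbdd ω) (phat (t+1) ω)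
    have hsum : ∑ ω, pX ω * ((∑ i ∈ S, Real.exp (q i ω + β * phat (t+1) ω i)) * c ω
          / (1 + Γ (t+1) ω))
        ≤ ∑ ω, pX ω * (D + ⨆ p : Fin N → ℝ, ∑ i ∈ S,
            (Real.exp (q i ω + β * p i) / (1 + ∑ j ∈ S, Real.exp (q j ω + β * p j))) *
              (p i - (V t S - V t (S.erase i)))) := by
      apply Finset.sum_le_sum
      intro ω _
      apply mul_le_mul_of_nonneg_left _ (hpX ω)
      exact le_trans (hcore ω) (add_le_add (le_refl D) (hsup ω))
    have hsplit : ∑ ω, pX ω * (D + ⨆ p : Fin N → ℝ, ∑ i ∈ S,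
          (Real.exp (q i ω + β * p i) / (1 + ∑ j ∈ S, Real.exp (q j ω + β * p j))) *
            (p i - (V t S - V t (S.erase i))))
        = D + ∑ ω, pX ω * (⨆ p : Fin N → ℝ, ∑ i ∈ S,
            (Real.exp (q i ω + β * p i) / (1 + ∑ j ∈ S, Real.exp (q j ω + β * p j))) *
              (p i - (V t S - V t (S.erase i)))) := by
      simp only [mul_add]
      rw [Finset.sum_add_distrib, ← Finset.sum_mul, hpX1, one_mul]
    set B := ∑ ω, pX ω * (⨆ p : Fin N → ℝ, ∑ i ∈ S,
        (Real.exp (q i ω + β * p i) / (1 + ∑ j ∈ S, Real.exp (q j ω + β * p j))) *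
          (p i - (V t S - V t (S.erase i)))) with hB
    have h5 : μ * (∑ ω, pX ω * ((∑ i ∈ S, Real.exp (q i ω + β * phat (t+1) ω i)) * c ω
          / (1 + Γ (t+1) ω))) ≤ μ * (D + B) := by
      apply mul_le_mul_of_nonneg_left _ hμ0.le
      calc _ ≤ _ := hsum
        _ = D + B := hsplit
    have h6 : μ * (D + B) = μ * D + μ * B := by ring
    have h7 : μ * D ≤ D := by nlinarith [hD, hμ1]
    clear_value D B
    linarith [h5, h6, h7, hDdef]
end

section
/- Fluid approximation is an upper bound (Appendix Proposition). Let S̄ = Fin N and T ≥ 1. Define V^Fluid_T as the supremum, over all ρ : Fin N → Ω → ℝ satisfying 0 < ρ_i^ω < 1 for all i, ω; Σ_{i∈Fin N} ρ_i^ω < 1 for every ω ∈ Ω; and E_X[ρ_i^X] ≤ 1/(μ·T) for every i, of the objective μ·T·Σ_{i∈Fin N} E_X[ ρ_i^X·(p_i^X(ρ) − ξ_i) ] + Σ_{i∈Fin N} ξ_i, where p_i^ω(ρ) = (1/β)·(ln ρ_i^ω − ln(1 − Σ_{j∈Fin N} ρ_j^ω) − q_i(ω)). Then V_T(S̄) ≤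 V^Fluid_T. -/
open Real Set
set_option maxHeartbeats 1000000

section AuxStmt14

variable {Ω : Type*} [Fintype Ω] {N : ℕ}

lemma aux_mul_log_ge {x : ℝ} (hx : 0 ≤ x) : -(Real.exp 1)⁻¹ ≤ x * Real.log x := by
  rcases eq_or_lt_of_le hx with h | h
  · simp [← h]
    positivity
  · have he : (0:ℝ) < Real.exp 1 := Real.exp_pos 1
    have h1 : Real.log ((Real.exp 1 * x)⁻¹) ≤ (Real.exp 1 * x)⁻¹ - 1 :=
      Real.log_le_sub_one_of_pos (by positivity)
    rw [Real.log_inv, Real.log_mul (ne_of_gt he) (ne_of_gt h), Real.log_exp, mul_inv] at h1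
    have h2 := mul_le_mul_of_nonneg_left h1 h.le
    have hxx : x * x⁻¹ = 1 := mul_inv_cancel₀ (ne_of_gt h)
    have h3 : x * ((Real.exp 1)⁻¹ * x⁻¹ - 1) = (Real.exp 1)⁻¹ - x := by
      rw [mul_sub, mul_one, ← mul_assoc, mul_comm x (Real.exp 1)⁻¹, mul_assoc, hxx, mul_one]
    rw [h3] at h2
    nlinarith

lemma aux_convexOn_neg_log : ConvexOn ℝ (Set.Ioi (0:ℝ)) (fun u => -Real.log u) :=
  strictConcaveOn_log_Ioi.concaveOn.neg

lemma aux_convexOn_phi : ConvexOn ℝ (Set.Ico (0:ℝ) 1) (fun u => -u * Real.log (1 - u)) := by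
  have h1 : ConvexOn ℝ (Set.Ico (0:ℝ) 1) (fun u => (1-u) * Real.log (1-u)) := by
    refine ⟨convex_Ico 0 1, fun x hx y hy a b ha hb hab => ?_⟩
    have hx' : (1:ℝ) - x ∈ Set.Ici (0:ℝ) := by simp; linarith [hx.2]
    have hy' : (1:ℝ) - y ∈ Set.Ici (0:ℝ) := by simp; linarith [hy.2]
    have := Real.convexOn_mul_log.2 hx' hy' ha hb hab
    simp only [smul_eq_mul] at this ⊢
    have e1 : 1 - (a * x + b * y) = a * (1-x) + b * (1-y) := by linarith [hab]
    rw [e1]; exact this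
  have h2 : ConvexOn ℝ (Set.Ico (0:ℝ) 1) (fun u => -Real.log (1-u)) := by
    refine ⟨convex_Ico 0 1, fun x hx y hy a b ha hb hab => ?_⟩
    have hx' : (1:ℝ) - x ∈ Set.Ioi (0:ℝ) := by simp; linarith [hx.2]
    have hy' : (1:ℝ) - y ∈ Set.Ioi (0:ℝ) := by simp; linarith [hy.2]
    have := aux_convexOn_neg_log.2 hx' hy' ha hb hab
    simp only [smul_eq_mul] at this ⊢
    have e1 : 1 - (a * x + b * y) = a * (1-x) + b * (1-y) := by linarith [hab]
    rw [e1]; exact this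
  have h3 := h1.add h2
  rw [show (fun u : ℝ => -u * Real.log (1 - u))
      = fun u => (1-u) * Real.log (1-u) + -Real.log (1-u) from funext fun u => by ring]
  exact h3

/-- domain of selection-probability vectors -/
def aux_Dom (S : Finset (Fin N)) : Set (Fin N → ℝ) :=
  {r | (∀ i, 0 ≤ r i) ∧ ∑ j ∈ S, r j < 1}

lemma aux_Dom_convex (S : Finset (Fin N)) : Convex ℝ (aux_Dom S) := by
  intro x hx y hy a b ha hb hab
  constructor
  · intro i
    simp only [Pi.add_apply, Pi.smul_apply, smul_eq_mul]
    have := hx.1 i; have := hy.1 i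
    positivity
  · simp only [Pi.add_apply, Pi.smul_apply, smul_eq_mul]
    rw [Finset.sum_add_distrib, ← Finset.mul_sum, ← Finset.mul_sum]
    rcases eq_or_lt_of_le ha with h|h
    · have hb1 : b = 1 := by linarith
      have := hy.2
      rw [← h, hb1]; simpa using this
    · nlinarith [hx.2, hy.2, mul_le_mul_of_nonneg_left hy.2.le hb,
        mul_lt_mul_of_pos_left hx.2 h]
    
/-- the per-type revenue function in probability space -/
noncomputable def aux_Rw (qw : Fin N → ℝ) (β : ℝ) (c : Fin N → ℝ) (S : Finset (Fin N))
    (r : Fin N → ℝ) : ℝ :=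
  ∑ i ∈ S, r i * ((1/β) * (Real.log (r i) - Real.log (1 - ∑ j ∈ S, r j) - qw i) - c i)

lemma aux_Rw_eq (qw : Fin N → ℝ) (β : ℝ) (c : Fin N → ℝ) (S : Finset (Fin N))
    (r : Fin N → ℝ) :
    aux_Rw qw β c S r
      = (1/β) * ∑ i ∈ S, r i * Real.log (r i)
        + (1/β) * (-(∑ i ∈ S, r i) * Real.log (1 - ∑ i ∈ S, r i))
        + ∑ i ∈ S, r i * (-(1/β) * qw i - c i) := by
  unfold aux_Rw
  calc ∑ i ∈ S, r i * ((1/β) * (Real.log (r i) - Real.log (1 - ∑ j ∈ S, r j) - qw i) - c i)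
      = ∑ i ∈ S, ((1/β) * (r i * Real.log (r i))
          + (1/β) * (r i * -(Real.log (1 - ∑ j ∈ S, r j)))
          + r i * (-(1/β) * qw i - c i)) :=
        Finset.sum_congr rfl (fun i _ => by ring)
    _ = (1/β) * (∑ i ∈ S, r i * Real.log (r i))
          + (1/β) * ((∑ i ∈ S, r i) * -(Real.log (1 - ∑ j ∈ S, r j)))
          + ∑ i ∈ S, r i * (-(1/β) * qw i - c i) := by
        rw [Finset.sum_add_distrib, Finset.sum_add_distrib, ← Finset.mul_sum, ← Finset.mul_sum,
          ← Finset.sum_mul]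
    _ = (1/β) * ∑ i ∈ S, r i * Real.log (r i)
        + (1/β) * (-(∑ i ∈ S, r i) * Real.log (1 - ∑ i ∈ S, r i))
        + ∑ i ∈ S, r i * (-(1/β) * qw i - c i) := by
        have : ∀ i ∈ S, r i * (-(1/β) * qw i - c i) = r i * (-(1/β * qw i) - c i) :=
          fun i _ => by ring
        rw [Finset.sum_congr rfl this]
        ring_nf

lemma aux_sum_mul_le (S : Finset (Fin N)) (r k : Fin N → ℝ) (h0 : ∀ i, 0 ≤ r i)
    (h1 : ∀ i ∈ S, r i ≤ 1) : ∑ i ∈ S, r i * k i ≤ ∑ i ∈ S, |k i| := by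
  refine Finset.sum_le_sum fun i hi => ?_
  calc r i * k i ≤ r i * |k i| := by
        have := le_abs_self (k i); have := h0 i; nlinarith
    _ ≤ 1 * |k i| := by have := abs_nonneg (k i); nlinarith [h1 i hi]
    _ = |k i| := one_mul _

-- convexity of the entropy sum
lemma aux_convexOn_entropy (S : Finset (Fin N)) :
    ConvexOn ℝ (aux_Dom S) (fun r => ∑ i ∈ S, r i * Real.log (r i)) := by
  refine ⟨aux_Dom_convex S, fun x hx y hy a b ha hb hab => ?_⟩
  simp only [smul_eq_mul, Pi.add_apply, Pi.smul_apply]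
  rw [Finset.mul_sum, Finset.mul_sum, ← Finset.sum_add_distrib]
  refine Finset.sum_le_sum fun i _ => ?_
  have := Real.convexOn_mul_log.2 (Set.mem_Ici.2 (hx.1 i)) (Set.mem_Ici.2 (hy.1 i)) ha hb hab
  simpa using this

lemma aux_convexOn_phiSum (S : Finset (Fin N)) :
    ConvexOn ℝ (aux_Dom S) (fun r => -(∑ i ∈ S, r i) * Real.log (1 - ∑ i ∈ S, r i)) := by
  refine ⟨aux_Dom_convex S, fun x hx y hy a b ha hb hab => ?_⟩
  have hsx : (∑ i ∈ S, x i) ∈ Set.Ico (0:ℝ) 1 :=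
    ⟨Finset.sum_nonneg fun i _ => hx.1 i, hx.2⟩
  have hsy : (∑ i ∈ S, y i) ∈ Set.Ico (0:ℝ) 1 :=
    ⟨Finset.sum_nonneg fun i _ => hy.1 i, hy.2⟩
  have key := aux_convexOn_phi.2 hsx hsy ha hb hab
  simp only [smul_eq_mul] at key ⊢
  have e1 : ∑ i ∈ S, (a • x + b • y) i = a * ∑ i ∈ S, x i + b * ∑ i ∈ S, y i := by
    simp only [Pi.add_apply, Pi.smul_apply, smul_eq_mul]
    rw [Finset.sum_add_distrib, Finset.mul_sum, Finset.mul_sum]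
  rw [e1]
  exact key

lemma aux_concaveOn_linear (S : Finset (Fin N)) (k : Fin N → ℝ) :
    ConcaveOn ℝ (aux_Dom S) (fun r => ∑ i ∈ S, r i * k i) := by
  refine ⟨aux_Dom_convex S, fun x hx y hy a b ha hb hab => ?_⟩
  refine le_of_eq ?_
  simp only [smul_eq_mul, Pi.add_apply, Pi.smul_apply]
  rw [Finset.mul_sum, Finset.mul_sum, ← Finset.sum_add_distrib]
  exact Finset.sum_congr rfl fun i _ => by ring

lemma aux_concave_smul_neg {s : Set (Fin N → ℝ)} {f : (Fin N → ℝ) → ℝ} {c : ℝ}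
    (hc : c ≤ 0) (hf : ConvexOn ℝ s f) : ConcaveOn ℝ s (fun r => c * f r) := by
  have h1 : ConcaveOn ℝ s (fun r => -f r) := hf.neg
  have h2 := h1.smul (c := -c) (by linarith)
  have e : (fun r => c * f r) = (-c) • (fun r => -f r) := by
    funext r
    simp only [Pi.smul_apply, smul_eq_mul]
    ring
  rw [e]; exact h2

lemma aux_Rw_concave (qw : Fin N → ℝ) {β : ℝ} (hβ : β < 0) (c : Fin N → ℝ)
    (S : Finset (Fin N)) : ConcaveOn ℝ (aux_Dom S) (aux_Rw qw β c S) := by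
  have hb : (1/β) ≤ 0 := by
    apply div_nonpos_of_nonneg_of_nonpos <;> linarith
  have h1 := aux_concave_smul_neg hb (aux_convexOn_entropy S)
  have h2 := aux_concave_smul_neg hb (aux_convexOn_phiSum S)
  have h3 := aux_concaveOn_linear S (fun i => -(1/β) * qw i - c i)
  have := (h1.add h2).add h3
  rw [show aux_Rw qw β c S = _ from funext fun r => aux_Rw_eq qw β c S r]
  exact this

/-- upper bound on Rw over the domain -/
lemma aux_Rw_bound (qw : Fin N → ℝ) {β : ℝ} (hβ : β < 0) (c : Fin N → ℝ)
    (S : Finset (Fin N)) {r : Fin N → ℝ} (hr : r ∈ aux_Dom S) :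
    aux_Rw qw β c S r ≤ (N : ℝ) * ((Real.exp 1)⁻¹ / (-β)) + ∑ i ∈ S, (|qw i| / (-β) + |c i|) := by
  obtain ⟨h0, h1⟩ := hr
  have hβ' : (0:ℝ) < -β := by linarith
  have hsnn : 0 ≤ ∑ j ∈ S, r j := Finset.sum_nonneg fun j _ => h0 j
  rw [aux_Rw_eq]
  have t1 : (1/β) * ∑ i ∈ S, r i * Real.log (r i) ≤ (N:ℝ) * ((Real.exp 1)⁻¹ / (-β)) := by
    have hlow : -((N:ℝ) * (Real.exp 1)⁻¹) ≤ ∑ i ∈ S, r i * Real.log (r i) := by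
      calc -((N:ℝ) * (Real.exp 1)⁻¹) ≤ ∑ _i ∈ S, -(Real.exp 1)⁻¹ := by
            rw [Finset.sum_const, nsmul_eq_mul]
            have hcard : (S.card : ℝ) ≤ (N : ℝ) := by
              exact_mod_cast Nat.cast_le.mpr (le_trans (Finset.card_le_univ S) (by simp))
            have hpos : (0:ℝ) ≤ (Real.exp 1)⁻¹ := by positivity
            nlinarith
        _ ≤ ∑ i ∈ S, r i * Real.log (r i) := Finset.sum_le_sum fun i _ => aux_mul_log_ge (h0 i)
    have : (1/β) * ∑ i ∈ S, r i * Real.log (r i)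
        ≤ (1/β) * (-((N:ℝ) * (Real.exp 1)⁻¹)) := by
      apply mul_le_mul_of_nonpos_left hlow
      apply div_nonpos_of_nonneg_of_nonpos <;> linarith
    calc (1/β) * ∑ i ∈ S, r i * Real.log (r i) ≤ (1/β) * (-((N:ℝ) * (Real.exp 1)⁻¹)) := this
      _ = (N:ℝ) * ((Real.exp 1)⁻¹ / (-β)) := by
          field_simp
  have t2 : (1/β) * (-(∑ i ∈ S, r i) * Real.log (1 - ∑ i ∈ S, r i)) ≤ 0 := by
    have hlog : Real.log (1 - ∑ i ∈ S, r i) ≤ 0 := Real.log_nonpos (by linarith) (by linarith)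
    have : 0 ≤ -(∑ i ∈ S, r i) * Real.log (1 - ∑ i ∈ S, r i) := by nlinarith
    have h1β : (1/β) ≤ 0 := by
      apply div_nonpos_of_nonneg_of_nonpos <;> linarith
    nlinarith
  have t3 : ∑ i ∈ S, r i * (-(1/β) * qw i - c i) ≤ ∑ i ∈ S, (|qw i| / (-β) + |c i|) := by
    refine Finset.sum_le_sum fun i hi => ?_
    have hri1 : r i ≤ 1 := by
      have : r i ≤ ∑ j ∈ S, r j := Finset.single_le_sum (fun j _ => h0 j) hi
      linarith
    have habs : -(1/β) * qw i - c i ≤ |qw i| / (-β) + |c i| := by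
      have e1 : -(1/β) * qw i ≤ |qw i| / (-β) := by
        have h4 : |qw i| / (-β) = (-β)⁻¹ * |qw i| := by rw [div_eq_mul_inv, mul_comm]
        have h5 : -(1/β) * qw i = (-β)⁻¹ * qw i := by rw [inv_neg]; ring
        rw [h4, h5]
        exact mul_le_mul_of_nonneg_left (le_abs_self _) (by positivity)
      have e2 : -c i ≤ |c i| := neg_le_abs _
      linarith
    have hnn : (0:ℝ) ≤ |qw i| / (-β) + |c i| := by positivity
    nlinarith [h0 i]
  linarith

/-- MNL inversion -/
lemma aux_Rw_inversion (qw : Fin N → ℝ) {β : ℝ} (hβ : β < 0) (c : Fin N → ℝ)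
    (S : Finset (Fin N)) (p : Fin N → ℝ) :
    aux_Rw qw β c S
        (fun i => if i ∈ S then Real.exp (qw i + β * p i)
            / (1 + ∑ j ∈ S, Real.exp (qw j + β * p j)) else 0)
      = ∑ i ∈ S,
          (Real.exp (qw i + β * p i) / (1 + ∑ j ∈ S, Real.exp (qw j + β * p j)))
            * (p i - c i) := by
  set E := ∑ j ∈ S, Real.exp (qw j + β * p j) with hE
  have hEnn : 0 ≤ E := Finset.sum_nonneg fun j _ => (Real.exp_pos _).le
  have hDpos : (0:ℝ) < 1 + E := by linarith
  set r : Fin N → ℝ := fun i => if i ∈ S then Real.exp (qw i + β * p i) / (1 + E) else 0 with hrdef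
  have hsum : ∑ j ∈ S, r j = E / (1 + E) := by
    rw [hE, Finset.sum_div]
    exact Finset.sum_congr rfl fun j hj => by simp [hrdef, hj, hE]
  have hone : 1 - ∑ j ∈ S, r j = 1 / (1 + E) := by
    rw [hsum]; field_simp; ring
  unfold aux_Rw
  refine Finset.sum_congr rfl fun i hi => ?_
  have hri : r i = Real.exp (qw i + β * p i) / (1 + E) := by simp [hrdef, hi]
  have hlogr : Real.log (r i) = (qw i + β * p i) - Real.log (1 + E) := by
    rw [hri, Real.log_div (Real.exp_ne_zero _) (ne_of_gt hDpos), Real.log_exp]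
  have hlog1 : Real.log (1 - ∑ j ∈ S, r j) = -Real.log (1 + E) := by
    rw [hone, Real.log_div one_ne_zero (ne_of_gt hDpos), Real.log_one]; ring
  rw [hlogr, hlog1, hri]
  have hβne : β ≠ 0 := ne_of_lt hβ
  field_simp
  ring

/-- cost shift -/
lemma aux_Rw_cost (qw : Fin N → ℝ) (β : ℝ) (c c' : Fin N → ℝ) (S : Finset (Fin N))
    (r : Fin N → ℝ) :
    aux_Rw qw β c S r = aux_Rw qw β c' S r - ∑ i ∈ S, r i * (c i - c' i) := by
  unfold aux_Rw
  rw [← Finset.sum_sub_distrib]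
  exact Finset.sum_congr rfl fun i _ => by ring

/-- erase a zero coordinate -/
lemma aux_Rw_erase (qw : Fin N → ℝ) (β : ℝ) (c : Fin N → ℝ) {S : Finset (Fin N)}
    {j : Fin N} (hj : j ∈ S) {r : Fin N → ℝ} (h0 : r j = 0) :
    aux_Rw qw β c S r = aux_Rw qw β c (S.erase j) r := by
  unfold aux_Rw
  have hsum : ∑ i ∈ S, r i = ∑ i ∈ S.erase j, r i := by
    rw [← Finset.add_sum_erase S r hj, h0, zero_add]
  rw [← Finset.add_sum_erase S _ hj, h0, zero_mul, zero_add]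
  refine Finset.sum_congr rfl fun i _ => by rw [hsum]

noncomputable def aux_Ob (pX : Ω → ℝ) (q : Fin N → Ω → ℝ) (ξ : Fin N → ℝ) (β : ℝ)
    (S : Finset (Fin N)) (ρ : Fin N → Ω → ℝ) : ℝ :=
  ∑ ω, pX ω * aux_Rw (fun i => q i ω) β ξ S (fun i => ρ i ω)

def aux_Feas (pX : Ω → ℝ) (μ : ℝ) (t : ℕ) (S : Finset (Fin N)) (ρ : Fin N → Ω → ℝ) : Prop :=
  (∀ i ∈ S, ∀ ω, 0 < ρ i ω) ∧ (∀ i ∉ S, ∀ ω, ρ i ω = 0) ∧ (∀ ω, ∑ i ∈ S, ρ i ω < 1) ∧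
  (∀ i ∈ S, μ * t * ∑ ω, pX ω * ρ i ω ≤ 1)

noncomputable def aux_FSet (pX : Ω → ℝ) (q : Fin N → Ω → ℝ) (ξ : Fin N → ℝ) (β μ : ℝ) (t : ℕ)
    (S : Finset (Fin N)) : Set ℝ :=
  {y | ∃ ρ, aux_Feas pX μ t S ρ ∧ y = μ * t * aux_Ob pX q ξ β S ρ}

lemma aux_Feas_nonneg {pX : Ω → ℝ} {μ : ℝ} {t : ℕ} {S : Finset (Fin N)} {ρ : Fin N → Ω → ℝ}
    (h : aux_Feas pX μ t S ρ) : ∀ i ω, 0 ≤ ρ i ω := by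
  intro i ω
  by_cases hi : i ∈ S
  · exact (h.1 i hi ω).le
  · exact (h.2.1 i hi ω).ge

lemma aux_Feas_domS {pX : Ω → ℝ} {μ : ℝ} {t : ℕ} {S : Finset (Fin N)} {ρ : Fin N → Ω → ℝ}
    (h : aux_Feas pX μ t S ρ) (ω : Ω) : (fun i => ρ i ω) ∈ aux_Dom S :=
  ⟨fun i => aux_Feas_nonneg h i ω, h.2.2.1 ω⟩

lemma aux_Feas_erase_sum {pX : Ω → ℝ} {μ : ℝ} {t : ℕ} {S : Finset (Fin N)} {j : Fin N}
    (hj : j ∈ S) {ρ : Fin N → Ω → ℝ} (h : aux_Feas pX μ t (S.erase j) ρ) (ω : Ω) :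
    ∑ i ∈ S, ρ i ω < 1 := by
  have hz : ρ j ω = 0 := h.2.1 j (Finset.notMem_erase j S) ω
  have := h.2.2.1 ω
  rw [← Finset.add_sum_erase S (fun i => ρ i ω) hj, hz, zero_add]
  exact this

lemma aux_Feas_erase_domS {pX : Ω → ℝ} {μ : ℝ} {t : ℕ} {S : Finset (Fin N)} {j : Fin N}
    (hj : j ∈ S) {ρ : Fin N → Ω → ℝ} (h : aux_Feas pX μ t (S.erase j) ρ) (ω : Ω) :
    (fun i => ρ i ω) ∈ aux_Dom S :=
  ⟨fun i => aux_Feas_nonneg h i ω, aux_Feas_erase_sum hj h ω⟩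

lemma aux_combine (pX : Ω → ℝ) (hpX : ∀ ω, 0 ≤ pX ω) (hpX1 : ∑ ω, pX ω = 1)
    (q : Fin N → Ω → ℝ) (ξ : Fin N → ℝ) {β : ℝ} (hβ : β < 0)
    {μ : ℝ} (hμ0 : 0 < μ) (hμ1 : μ ≤ 1)
    (t : ℕ) (S : Finset (Fin N)) (r1 : Fin N → Ω → ℝ)
    (hr1pos : ∀ i ∈ S, ∀ ω, 0 < r1 i ω) (hr1zero : ∀ i ∉ S, ∀ ω, r1 i ω = 0)
    (hr1sum : ∀ ω, ∑ i ∈ S, r1 i ω < 1)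
    (σ0 : Fin N → Ω → ℝ) (hσ0 : aux_Feas pX μ t S σ0)
    (σ : Fin N → Fin N → Ω → ℝ) (hσ : ∀ j, aux_Feas pX μ t (S.erase j) (σ j))
    (w : Fin N → ℝ) (hw : ∀ i, w i = μ * ∑ ω, pX ω * r1 i ω)
    (w0 : ℝ) (hw0 : w0 = 1 - ∑ i ∈ S, w i)
    (τ : Fin N → Ω → ℝ)
    (hτ : ∀ i ω, τ i ω = (1/((t:ℝ)+1)) * r1 i ω
        + ((t:ℝ)/((t:ℝ)+1)) * (w0 * σ0 i ω + ∑ j ∈ S, w j * σ j i ω)) :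
    aux_Feas pX μ (t+1) S τ ∧
    μ * aux_Ob pX q ξ β S r1
        + μ * t * (w0 * aux_Ob pX q ξ β S σ0
            + ∑ j ∈ S, w j * aux_Ob pX q ξ β (S.erase j) (σ j))
      ≤ μ * ((t:ℝ)+1) * aux_Ob pX q ξ β S τ := by
  -- basic facts
  have ht1 : (0:ℝ) < (t:ℝ)+1 := by positivity
  set a : ℝ := 1/((t:ℝ)+1) with ha_def
  set b : ℝ := (t:ℝ)/((t:ℝ)+1) with hb_def
  have ha : 0 < a := by positivity
  have hb : 0 ≤ b := by positivity
  have hab : a + b = 1 := by rw [ha_def, hb_def]; field_simp; ring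
  have hta : ((t:ℝ)+1) * a = 1 := by rw [ha_def]; field_simp
  have htb : ((t:ℝ)+1) * b = (t:ℝ) := by rw [hb_def]; field_simp
  have hr1nn : ∀ i ω, 0 ≤ r1 i ω := by
    intro i ω; by_cases hi : i ∈ S
    · exact (hr1pos i hi ω).le
    · exact (hr1zero i hi ω).ge
  have hwnn : ∀ i, 0 ≤ w i := by
    intro i; rw [hw i]
    have : 0 ≤ ∑ ω, pX ω * r1 i ω :=
      Finset.sum_nonneg fun ω _ => mul_nonneg (hpX ω) (hr1nn i ω)
    positivity
  have hwsum : ∑ i ∈ S, w i ≤ μ := by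
    have e1 : ∑ i ∈ S, w i = μ * ∑ ω, pX ω * ∑ i ∈ S, r1 i ω := by
      simp_rw [hw]
      rw [← Finset.mul_sum, Finset.sum_comm]
      congr 1
      exact Finset.sum_congr rfl fun ω _ => (Finset.mul_sum _ _ _).symm
    rw [e1]
    have e2 : ∑ ω, pX ω * ∑ i ∈ S, r1 i ω ≤ ∑ ω, pX ω :=
      Finset.sum_le_sum fun ω _ => by
        have := hr1sum ω
        nlinarith [hpX ω]
    rw [hpX1] at e2
    nlinarith
  have hw0nn : 0 ≤ w0 := by rw [hw0]; linarith
  have hw0sum : w0 + ∑ i ∈ S, w i = 1 := by rw [hw0]; ring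
  -- domain memberships
  have hXdom : ∀ ω, (fun i => r1 i ω) ∈ aux_Dom S := fun ω => ⟨fun i => hr1nn i ω, hr1sum ω⟩
  have hY0dom : ∀ ω, (fun i => σ0 i ω) ∈ aux_Dom S := aux_Feas_domS hσ0
  have hYdom : ∀ j ∈ S, ∀ ω, (fun i => σ j i ω) ∈ aux_Dom S :=
    fun j hj ω => aux_Feas_erase_domS hj (hσ j) ω
  have hσ0nn := aux_Feas_nonneg hσ0
  have hσnn : ∀ j i ω, 0 ≤ σ j i ω := fun j => aux_Feas_nonneg (hσ j)
  -- exchange helper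
  have aux_exchange : ∀ (f : Fin N → Ω → ℝ) (c : Fin N → ℝ),
      ∑ ω, pX ω * ∑ j ∈ S, c j * f j ω = ∑ j ∈ S, c j * ∑ ω, pX ω * f j ω := by
    intro f c
    simp_rw [Finset.mul_sum]
    rw [Finset.sum_comm]
    exact Finset.sum_congr rfl fun j _ => Finset.sum_congr rfl fun ω _ => by ring
  -- feasibility
  have hfeas : aux_Feas pX μ (t+1) S τ := by
    refine ⟨?_, ?_, ?_, ?_⟩
    · intro i hi ω
      rw [hτ i ω]
      have h1 : 0 ≤ ∑ j ∈ S, w j * σ j i ω :=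
        Finset.sum_nonneg fun j _ => mul_nonneg (hwnn j) (hσnn j i ω)
      nlinarith [hr1pos i hi ω, mul_pos ha (hr1pos i hi ω),
        mul_nonneg hw0nn (hσ0nn i ω),
        mul_nonneg hb (by nlinarith [mul_nonneg hw0nn (hσ0nn i ω)] :
          (0:ℝ) ≤ w0 * σ0 i ω + ∑ j ∈ S, w j * σ j i ω)]
    · intro i hi ω
      rw [hτ i ω, hr1zero i hi ω, hσ0.2.1 i hi ω]
      have hz : ∀ j ∈ S, w j * σ j i ω = 0 := by
        intro j hj
        have : σ j i ω = 0 := (hσ j).2.1 i (fun hm => hi (Finset.mem_of_mem_erase hm)) ω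
        rw [this, mul_zero]
      rw [Finset.sum_congr rfl hz]
      simp
    · intro ω
      have hexp : ∑ i ∈ S, τ i ω
          = a * (∑ i ∈ S, r1 i ω)
            + b * (w0 * (∑ i ∈ S, σ0 i ω) + ∑ j ∈ S, w j * (∑ i ∈ S, σ j i ω)) := by
        rw [Finset.sum_congr rfl (fun i (_ : i ∈ S) => hτ i ω), Finset.sum_add_distrib,
          ← Finset.mul_sum]
        congr 1
        rw [← Finset.mul_sum]
        congr 1
        rw [Finset.sum_add_distrib, ← Finset.mul_sum]
        congr 1
        rw [Finset.sum_comm]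
        exact Finset.sum_congr rfl fun j _ => (Finset.mul_sum _ _ _).symm
      rw [hexp]
      have h1 : w0 * (∑ i ∈ S, σ0 i ω) ≤ w0 := by
        nlinarith [hσ0.2.2.1 ω, Finset.sum_nonneg (fun i (_ : i ∈ S) => hσ0nn i ω)]
      have h2 : ∑ j ∈ S, w j * (∑ i ∈ S, σ j i ω) ≤ ∑ j ∈ S, w j := by
        refine Finset.sum_le_sum fun j hj => ?_
        have hs := aux_Feas_erase_sum hj (hσ j) ω
        nlinarith [hwnn j, Finset.sum_nonneg (fun i (_ : i ∈ S) => hσnn j i ω)]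
      nlinarith [mul_lt_mul_of_pos_left (hr1sum ω) ha, mul_le_mul_of_nonneg_left
        (by linarith [hw0sum] : w0 * (∑ i ∈ S, σ0 i ω) + ∑ j ∈ S, w j * (∑ i ∈ S, σ j i ω) ≤ 1)
        hb]
    · intro i hi
      have hexp : ∀ ω, pX ω * τ i ω
          = a * (pX ω * r1 i ω) + b * w0 * (pX ω * σ0 i ω)
            + b * (pX ω * ∑ j ∈ S, w j * σ j i ω) := fun ω => by rw [hτ i ω]; ring
      rw [Finset.sum_congr rfl (fun ω (_ : ω ∈ Finset.univ) => hexp ω), Finset.sum_add_distrib,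
        Finset.sum_add_distrib, ← Finset.mul_sum, ← Finset.mul_sum, ← Finset.mul_sum,
        aux_exchange (fun j ω => σ j i ω) w]
      have hCi : (∑ ω, pX ω * σ i i ω) = 0 := by
        have hz : ∀ ω, σ i i ω = 0 := fun ω => (hσ i).2.1 i (Finset.notMem_erase i S) ω
        simp [hz]
      have hkey : μ * ((t:ℝ)+1) *
          (a * (∑ ω, pX ω * r1 i ω) + b * w0 * (∑ ω, pX ω * σ0 i ω)
            + b * ∑ j ∈ S, w j * ∑ ω, pX ω * σ j i ω)
          = w i + w0 * (μ * (t:ℝ) * (∑ ω, pX ω * σ0 i ω))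
            + ∑ j ∈ S, w j * (μ * (t:ℝ) * (∑ ω, pX ω * σ j i ω)) := by
        have e3 : ∑ j ∈ S, w j * (μ * (t:ℝ) * (∑ ω, pX ω * σ j i ω))
            = μ * (t:ℝ) * ∑ j ∈ S, w j * (∑ ω, pX ω * σ j i ω) := by
          rw [Finset.mul_sum]
          exact Finset.sum_congr rfl fun j _ => by ring
        rw [e3, hw i, ha_def, hb_def]
        field_simp
      have hgoalcast : ((t+1 : ℕ) : ℝ) = (t:ℝ) + 1 := by push_cast; ring
      rw [hgoalcast, hkey]
      have hB : w0 * (μ * (t:ℝ) * (∑ ω, pX ω * σ0 i ω)) ≤ w0 := by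
        nlinarith [hσ0.2.2.2 i hi, hw0nn]
      have hC : ∑ j ∈ S, w j * (μ * (t:ℝ) * (∑ ω, pX ω * σ j i ω))
          ≤ ∑ j ∈ S, w j - w i := by
        rw [← Finset.add_sum_erase S _ hi, hCi]
        have e4 : ∑ j ∈ S, w j - w i = ∑ j ∈ S.erase i, w j := by
          rw [← Finset.add_sum_erase S w hi]; ring
        rw [e4]
        have : ∀ j ∈ S.erase i, w j * (μ * (t:ℝ) * (∑ ω, pX ω * σ j i ω)) ≤ w j := by
          intro j hj
          have hiej : i ∈ S.erase j :=
            Finset.mem_erase.2 ⟨Ne.symm (Finset.mem_erase.1 hj).1, hi⟩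
          nlinarith [(hσ j).2.2.2 i hiej, hwnn j]
        calc w i * (μ * (t:ℝ) * 0) + ∑ j ∈ S.erase i, w j * (μ * (t:ℝ) * (∑ ω, pX ω * σ j i ω))
            ≤ 0 + ∑ j ∈ S.erase i, w j := by
              rw [mul_zero, mul_zero]
              exact add_le_add le_rfl (Finset.sum_le_sum this)
          _ = ∑ j ∈ S.erase i, w j := by ring
      linarith
  refine ⟨hfeas, ?_⟩
  -- value inequality, per ω
  have hval : ∀ ω, pX ω *
        (a * aux_Rw (fun i => q i ω) β ξ S (fun i => r1 i ω)
          + b * (w0 * aux_Rw (fun i => q i ω) β ξ S (fun i => σ0 i ω)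
            + ∑ j ∈ S, w j * aux_Rw (fun i => q i ω) β ξ (S.erase j) (fun i => σ j i ω)))
      ≤ pX ω * aux_Rw (fun i => q i ω) β ξ S (fun i => τ i ω) := by
    intro ω
    refine mul_le_mul_of_nonneg_left ?_ (hpX ω)
    set W : Option (Fin N) → ℝ := fun o => o.elim w0 w with hWdef
    set P : Option (Fin N) → Fin N → ℝ :=
      fun o => o.elim (fun i => σ0 i ω) (fun j => fun i => σ j i ω) with hPdef
    set ι : Finset (Option (Fin N)) := insert none (S.image some) with hιdef
    have hnone : (none : Option (Fin N)) ∉ S.image some := by simp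
    have hinj : ∀ x ∈ S, ∀ y ∈ S, some x = some y → x = y := fun x _ y _ h => Option.some.inj h
    have hW0 : ∀ o ∈ ι, 0 ≤ W o := by
      intro o _
      match o with
      | none => exact hw0nn
      | some j => exact hwnn j
    have hW1 : ∑ o ∈ ι, W o = 1 := by
      rw [hιdef, Finset.sum_insert hnone, Finset.sum_image hinj]
      exact hw0sum
    have hmem : ∀ o ∈ ι, P o ∈ aux_Dom S := by
      intro o ho
      match o with
      | none => exact hY0dom ω
      | some j =>
        rw [hιdef, Finset.mem_insert] at ho
        rcases ho with h | h
        · exact absurd h (by simp)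
        · obtain ⟨j', hj', hjj⟩ := Finset.mem_image.1 h
          obtain rfl : j' = j := Option.some.inj hjj
          exact hYdom j' hj' ω
    have hjensen := (aux_Rw_concave (fun i => q i ω) hβ ξ S).le_map_sum hW0 hW1 hmem
    have hMsum : (∑ o ∈ ι, W o • P o)
        = fun i => w0 * σ0 i ω + ∑ j ∈ S, w j * σ j i ω := by
      rw [hιdef, Finset.sum_insert hnone, Finset.sum_image hinj]
      funext i
      simp only [Pi.add_apply, Pi.smul_apply, Finset.sum_apply, smul_eq_mul, hWdef, hPdef,
        Option.elim]
    have hLsum : ∑ o ∈ ι, W o • aux_Rw (fun i => q i ω) β ξ S (P o)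
        = w0 * aux_Rw (fun i => q i ω) β ξ S (fun i => σ0 i ω)
          + ∑ j ∈ S, w j * aux_Rw (fun i => q i ω) β ξ S (fun i => σ j i ω) := by
      rw [hιdef, Finset.sum_insert hnone, Finset.sum_image hinj]
      simp only [hWdef, hPdef, Option.elim, smul_eq_mul]
    rw [hMsum, hLsum] at hjensen
    have hMdom : (fun i => w0 * σ0 i ω + ∑ j ∈ S, w j * σ j i ω) ∈ aux_Dom S := by
      rw [← hMsum]
      exact (aux_Dom_convex S).sum_mem hW0 hW1 hmem
    have h2pt := (aux_Rw_concave (fun i => q i ω) hβ ξ S).2 (hXdom ω) hMdom ha.le hb hab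
    have hτeq : (fun i => τ i ω)
        = a • (fun i => r1 i ω)
          + b • (fun i => w0 * σ0 i ω + ∑ j ∈ S, w j * σ j i ω) := by
      funext i
      simp only [Pi.add_apply, Pi.smul_apply, smul_eq_mul]
      exact hτ i ω
    rw [← hτeq] at h2pt
    simp only [smul_eq_mul] at h2pt
    have herase : ∑ j ∈ S, w j * aux_Rw (fun i => q i ω) β ξ (S.erase j) (fun i => σ j i ω)
        = ∑ j ∈ S, w j * aux_Rw (fun i => q i ω) β ξ S (fun i => σ j i ω) := by
      refine Finset.sum_congr rfl fun j hj => ?_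
      rw [aux_Rw_erase (fun i => q i ω) β ξ hj
        (show σ j j ω = 0 from (hσ j).2.1 j (Finset.notMem_erase j S) ω)]
    rw [herase]
    calc a * aux_Rw (fun i => q i ω) β ξ S (fun i => r1 i ω)
          + b * (w0 * aux_Rw (fun i => q i ω) β ξ S (fun i => σ0 i ω)
            + ∑ j ∈ S, w j * aux_Rw (fun i => q i ω) β ξ S (fun i => σ j i ω))
        ≤ a * aux_Rw (fun i => q i ω) β ξ S (fun i => r1 i ω)
          + b * aux_Rw (fun i => q i ω) β ξ S
              (fun i => w0 * σ0 i ω + ∑ j ∈ S, w j * σ j i ω) := by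
          have := mul_le_mul_of_nonneg_left hjensen hb
          linarith
      _ ≤ aux_Rw (fun i => q i ω) β ξ S (fun i => τ i ω) := h2pt
  -- sum the per-ω inequality
  have hsum := Finset.sum_le_sum fun ω (_ : ω ∈ Finset.univ) => hval ω
  have hLHS : ∑ ω, pX ω *
        (a * aux_Rw (fun i => q i ω) β ξ S (fun i => r1 i ω)
          + b * (w0 * aux_Rw (fun i => q i ω) β ξ S (fun i => σ0 i ω)
            + ∑ j ∈ S, w j * aux_Rw (fun i => q i ω) β ξ (S.erase j) (fun i => σ j i ω)))
      = a * aux_Ob pX q ξ β S r1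
        + b * (w0 * aux_Ob pX q ξ β S σ0
          + ∑ j ∈ S, w j * aux_Ob pX q ξ β (S.erase j) (σ j)) := by
    have e0 : ∀ ω, pX ω *
          (a * aux_Rw (fun i => q i ω) β ξ S (fun i => r1 i ω)
            + b * (w0 * aux_Rw (fun i => q i ω) β ξ S (fun i => σ0 i ω)
              + ∑ j ∈ S, w j * aux_Rw (fun i => q i ω) β ξ (S.erase j) (fun i => σ j i ω)))
        = a * (pX ω * aux_Rw (fun i => q i ω) β ξ S (fun i => r1 i ω))
          + b * w0 * (pX ω * aux_Rw (fun i => q i ω) β ξ S (fun i => σ0 i ω))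
          + b * (pX ω * ∑ j ∈ S, w j
              * aux_Rw (fun i => q i ω) β ξ (S.erase j) (fun i => σ j i ω)) :=
      fun ω => by ring
    rw [Finset.sum_congr rfl fun ω (_ : ω ∈ Finset.univ) => e0 ω, Finset.sum_add_distrib,
      Finset.sum_add_distrib, ← Finset.mul_sum, ← Finset.mul_sum, ← Finset.mul_sum,
      aux_exchange (fun j ω => aux_Rw (fun i => q i ω) β ξ (S.erase j) (fun i => σ j i ω)) w]
    unfold aux_Ob
    ring
  rw [hLHS] at hsum
  have hObτ : ∑ ω, pX ω * aux_Rw (fun i => q i ω) β ξ S (fun i => τ i ω)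
      = aux_Ob pX q ξ β S τ := rfl
  rw [hObτ] at hsum
  have hfinal := mul_le_mul_of_nonneg_left hsum (by positivity : (0:ℝ) ≤ μ * ((t:ℝ)+1))
  calc μ * aux_Ob pX q ξ β S r1
        + μ * (t:ℝ) * (w0 * aux_Ob pX q ξ β S σ0
          + ∑ j ∈ S, w j * aux_Ob pX q ξ β (S.erase j) (σ j))
      = μ * ((t:ℝ)+1) *
          (a * aux_Ob pX q ξ β S r1
            + b * (w0 * aux_Ob pX q ξ β S σ0
              + ∑ j ∈ S, w j * aux_Ob pX q ξ β (S.erase j) (σ j))) := by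
        rw [ha_def, hb_def]
        field_simp
    _ ≤ μ * ((t:ℝ)+1) * aux_Ob pX q ξ β S τ := hfinal

lemma aux_FSet_nonempty (pX : Ω → ℝ) (hpX : ∀ ω, 0 ≤ pX ω) (hpX1 : ∑ ω, pX ω = 1)
    (q : Fin N → Ω → ℝ) (ξ : Fin N → ℝ) (β : ℝ) {μ : ℝ} (hμ0 : 0 < μ) (hμ1 : μ ≤ 1)
    (hN : 1 ≤ N) (t : ℕ) (S : Finset (Fin N)) :
    (aux_FSet pX q ξ β μ t S).Nonempty := by
  set δ : ℝ := 1 / (2 * N * (t + 1)) with hδ_def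
  have hN1 : (1:ℝ) ≤ (N:ℝ) := by exact_mod_cast hN
  have hδpos : 0 < δ := by positivity
  set ρ : Fin N → Ω → ℝ := fun i ω => if i ∈ S then δ else 0 with hρ_def
  refine ⟨μ * t * aux_Ob pX q ξ β S ρ, ρ, ⟨?_, ?_, ?_, ?_⟩, rfl⟩
  · intro i hi ω; simp only [hρ_def, if_pos hi]; exact hδpos
  · intro i hi ω; simp only [hρ_def, if_neg hi]
  · intro ω
    have e1 : ∑ i ∈ S, ρ i ω = S.card * δ := by
      have hterm : ∀ i ∈ S, ρ i ω = δ := fun i hi => by simp only [hρ_def]; rw [if_pos hi]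
      rw [Finset.sum_congr rfl hterm, Finset.sum_const, nsmul_eq_mul]
    rw [e1]
    have hcard : (S.card : ℝ) ≤ (N : ℝ) := by
      exact_mod_cast Finset.card_le_univ S |>.trans (by simp)
    have ht0 : (0:ℝ) < (t:ℝ) + 1 := by positivity
    have : (S.card : ℝ) * δ ≤ (N:ℝ) * δ := by nlinarith
    have e2 : (N:ℝ) * δ = 1 / (2 * ((t:ℝ) + 1)) := by
      rw [hδ_def]; push_cast; field_simp
    have e3 : 1 / (2*((t:ℝ)+1)) < 1 := by
      rw [div_lt_one (by positivity)]; nlinarith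
    calc (S.card : ℝ) * δ ≤ (N:ℝ) * δ := this
      _ = 1 / (2 * ((t:ℝ) + 1)) := e2
      _ < 1 := e3
  · intro i hi
    have e1 : ∀ ω, pX ω * ρ i ω = pX ω * δ := fun ω => by simp only [hρ_def, if_pos hi]
    rw [Finset.sum_congr rfl fun ω _ => e1 ω, ← Finset.sum_mul, hpX1, one_mul]
    have ht0 : (0:ℝ) ≤ (t:ℝ) := Nat.cast_nonneg t
    have key : μ * (t:ℝ) * δ ≤ (t:ℝ) * δ := by
      nlinarith [mul_nonneg (mul_nonneg (by linarith : (0:ℝ) ≤ 1 - μ) ht0) hδpos.le]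
    have key2 : (t:ℝ) * δ ≤ 1 := by
      rw [hδ_def]
      rw [div_eq_mul_inv, ← mul_assoc]
      have h2 : (0:ℝ) < 2 * (N:ℝ) * ((t:ℝ)+1) := by positivity
      push_cast
      rw [mul_one]
      rw [inv_eq_one_div, mul_comm ((t:ℝ)) (1 / (2 * (N:ℝ) * ((t:ℝ)+1)))]
      rw [div_mul_eq_mul_div, one_mul, div_le_one h2]
      nlinarith
    linarith

lemma aux_FSet_bddAbove (pX : Ω → ℝ) (hpX : ∀ ω, 0 ≤ pX ω)
    (q : Fin N → Ω → ℝ) (ξ : Fin N → ℝ) {β : ℝ} (hβ : β < 0) {μ : ℝ} (hμ0 : 0 < μ)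
    (t : ℕ) (S : Finset (Fin N)) :
    BddAbove (aux_FSet pX q ξ β μ t S) := by
  refine ⟨μ * t * ∑ ω, pX ω * ((N : ℝ) * ((Real.exp 1)⁻¹ / (-β))
    + ∑ i ∈ S, (|q i ω| / (-β) + |ξ i|)), ?_⟩
  rintro y ⟨ρ, hfeas, rfl⟩
  have hOb : aux_Ob pX q ξ β S ρ ≤ ∑ ω, pX ω * ((N : ℝ) * ((Real.exp 1)⁻¹ / (-β))
      + ∑ i ∈ S, (|q i ω| / (-β) + |ξ i|)) := by
    refine Finset.sum_le_sum fun ω _ => ?_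
    exact mul_le_mul_of_nonneg_left
      (aux_Rw_bound (fun i => q i ω) hβ ξ S (aux_Feas_domS hfeas ω)) (hpX ω)
  have hμt : (0:ℝ) ≤ μ * t := by positivity
  nlinarith

theorem aux_main (pX : Ω → ℝ) (hpX : ∀ ω, 0 ≤ pX ω) (hpX1 : ∑ ω, pX ω = 1)
    (hN : 1 ≤ N) (q : Fin N → Ω → ℝ) (ξ : Fin N → ℝ) {β : ℝ} (hβ : β < 0)
    {μ : ℝ} (hμ0 : 0 < μ) (hμ1 : μ ≤ 1)
    (V : ℕ → Finset (Fin N) → ℝ)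
    (hV0 : ∀ S : Finset (Fin N), V 0 S = ∑ i ∈ S, ξ i)
    (hV : ∀ t : ℕ, 1 ≤ t → ∀ S : Finset (Fin N),
      V t S = V (t - 1) S + μ * ∑ ω, pX ω *
        (⨆ p : Fin N → ℝ, ∑ i ∈ S,
          (Real.exp (q i ω + β * p i) / (1 + ∑ j ∈ S, Real.exp (q j ω + β * p j))) *
            (p i - (V (t - 1) S - V (t - 1) (S.erase i))))) :
    ∀ t S, V t S ≤ (∑ i ∈ S, ξ i) + sSup (aux_FSet pX q ξ β μ t S) := by
  intro t
  induction t with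
  | zero =>
    intro S
    obtain ⟨y, hy⟩ := aux_FSet_nonempty pX hpX hpX1 q ξ β hμ0 hμ1 hN 0 S
    have hall : ∀ z ∈ aux_FSet pX q ξ β μ 0 S, z = 0 := by
      rintro z ⟨ρ, _, rfl⟩
      simp
    have hset : aux_FSet pX q ξ β μ 0 S = {0} := by
      ext z
      simp only [Set.mem_singleton_iff]
      constructor
      · exact hall z
      · rintro rfl
        exact (hall y hy) ▸ hy
    rw [hset, csSup_singleton, hV0]
    simp
  | succ t ih =>
    intro S
    have key : ∀ ε : ℝ, 0 < ε →
        V (t+1) S ≤ (∑ i ∈ S, ξ i) + sSup (aux_FSet pX q ξ β μ (t+1) S) + (1+μ)*ε := by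
      intro ε hε
      have hrec := hV (t+1) (Nat.le_add_left 1 t) S
      simp only [Nat.add_sub_cancel] at hrec
      -- ε-optimal prices for each customer type
      have hpch : ∀ ω : Ω, ∃ p : Fin N → ℝ,
          (⨆ p : Fin N → ℝ, ∑ i ∈ S,
            (Real.exp (q i ω + β * p i) / (1 + ∑ j ∈ S, Real.exp (q j ω + β * p j))) *
              (p i - (V t S - V t (S.erase i))))
          ≤ (∑ i ∈ S,
            (Real.exp (q i ω + β * p i) / (1 + ∑ j ∈ S, Real.exp (q j ω + β * p j))) *
              (p i - (V t S - V t (S.erase i)))) + ε := by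
        intro ω
        obtain ⟨p, hp⟩ := exists_lt_of_lt_ciSup
          (sub_lt_self (⨆ p : Fin N → ℝ, ∑ i ∈ S,
            (Real.exp (q i ω + β * p i) / (1 + ∑ j ∈ S, Real.exp (q j ω + β * p j))) *
              (p i - (V t S - V t (S.erase i)))) hε)
        exact ⟨p, by linarith⟩
      choose pf hpf using hpch
      set r1 : Fin N → Ω → ℝ := fun i ω => if i ∈ S then
          Real.exp (q i ω + β * pf ω i) / (1 + ∑ j ∈ S, Real.exp (q j ω + β * pf ω j))
        else 0 with hr1_def
      have hEpos : ∀ ω, (0:ℝ) < 1 + ∑ j ∈ S, Real.exp (q j ω + β * pf ω j) := by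
        intro ω
        have := Finset.sum_nonneg fun j (_ : j ∈ S) => (Real.exp_pos (q j ω + β * pf ω j)).le
        linarith
      have hr1pos : ∀ i ∈ S, ∀ ω, 0 < r1 i ω := by
        intro i hi ω
        simp only [hr1_def]
        rw [if_pos hi]
        exact div_pos (Real.exp_pos _) (hEpos ω)
      have hr1zero : ∀ i ∉ S, ∀ ω, r1 i ω = 0 := by
        intro i hi ω
        simp only [hr1_def]
        rw [if_neg hi]
      have hr1sum : ∀ ω, ∑ i ∈ S, r1 i ω < 1 := by
        intro ω
        have hterm : ∀ i ∈ S, r1 i ω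
            = Real.exp (q i ω + β * pf ω i)
              / (1 + ∑ j ∈ S, Real.exp (q j ω + β * pf ω j)) := by
          intro i hi
          simp only [hr1_def]
          rw [if_pos hi]
        rw [Finset.sum_congr rfl hterm, ← Finset.sum_div, div_lt_one (hEpos ω)]
        linarith
      -- value of chosen prices, in probability space
      have hinv : ∀ ω, (∑ i ∈ S,
            (Real.exp (q i ω + β * pf ω i)
              / (1 + ∑ j ∈ S, Real.exp (q j ω + β * pf ω j))) *
              (pf ω i - (V t S - V t (S.erase i))))
          = aux_Rw (fun i => q i ω) β (fun i => V t S - V t (S.erase i)) S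
              (fun i => r1 i ω) := by
        intro ω
        exact (aux_Rw_inversion (fun i => q i ω) hβ
          (fun i => V t S - V t (S.erase i)) S (pf ω)).symm
      -- first bound
      have hb1 : V (t+1) S ≤ V t S + μ * ε + μ * ∑ ω, pX ω *
          aux_Rw (fun i => q i ω) β (fun i => V t S - V t (S.erase i)) S
            (fun i => r1 i ω) := by
        rw [hrec]
        have h1 : ∑ ω, pX ω * (⨆ p : Fin N → ℝ, ∑ i ∈ S,
              (Real.exp (q i ω + β * p i) / (1 + ∑ j ∈ S, Real.exp (q j ω + β * p j))) *
                (p i - (V t S - V t (S.erase i))))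
            ≤ ∑ ω, pX ω * (aux_Rw (fun i => q i ω) β
                (fun i => V t S - V t (S.erase i)) S (fun i => r1 i ω) + ε) := by
          refine Finset.sum_le_sum fun ω _ => mul_le_mul_of_nonneg_left ?_ (hpX ω)
          calc (⨆ p : Fin N → ℝ, ∑ i ∈ S,
              (Real.exp (q i ω + β * p i) / (1 + ∑ j ∈ S, Real.exp (q j ω + β * p j))) *
                (p i - (V t S - V t (S.erase i))))
              ≤ (∑ i ∈ S,
                (Real.exp (q i ω + β * pf ω i)
                  / (1 + ∑ j ∈ S, Real.exp (q j ω + β * pf ω j))) *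
                  (pf ω i - (V t S - V t (S.erase i)))) + ε := hpf ω
            _ = aux_Rw (fun i => q i ω) β (fun i => V t S - V t (S.erase i)) S
                  (fun i => r1 i ω) + ε := by rw [hinv ω]
        have h2 : ∑ ω, pX ω * (aux_Rw (fun i => q i ω) β
              (fun i => V t S - V t (S.erase i)) S (fun i => r1 i ω) + ε)
            = (∑ ω, pX ω * aux_Rw (fun i => q i ω) β
                (fun i => V t S - V t (S.erase i)) S (fun i => r1 i ω)) + ε := by
          simp_rw [mul_add]
          rw [Finset.sum_add_distrib, ← Finset.sum_mul, hpX1, one_mul]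
        rw [h2] at h1
        nlinarith [h1, hμ0.le]
      -- cost shift
      have hcost : ∀ ω, aux_Rw (fun i => q i ω) β
            (fun i => V t S - V t (S.erase i)) S (fun i => r1 i ω)
          = aux_Rw (fun i => q i ω) β ξ S (fun i => r1 i ω)
            - ∑ i ∈ S, r1 i ω * ((V t S - V t (S.erase i)) - ξ i) :=
        fun ω => aux_Rw_cost (fun i => q i ω) β
          (fun i => V t S - V t (S.erase i)) ξ S (fun i => r1 i ω)
      set w : Fin N → ℝ := fun i => μ * ∑ ω, pX ω * r1 i ω with hw_def
      set w0 : ℝ := 1 - ∑ i ∈ S, w i with hw0_def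
      have hr1nn : ∀ i ω, 0 ≤ r1 i ω := by
        intro i ω
        by_cases hi : i ∈ S
        · exact (hr1pos i hi ω).le
        · exact (hr1zero i hi ω).ge
      have hwnn : ∀ i, 0 ≤ w i := by
        intro i
        rw [hw_def]
        have : 0 ≤ ∑ ω, pX ω * r1 i ω :=
          Finset.sum_nonneg fun ω _ => mul_nonneg (hpX ω) (hr1nn i ω)
        positivity
      have hwsum : ∑ i ∈ S, w i ≤ μ := by
        have e1 : ∑ i ∈ S, w i = μ * ∑ ω, pX ω * ∑ i ∈ S, r1 i ω := by
          simp_rw [hw_def]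
          rw [← Finset.mul_sum, Finset.sum_comm]
          congr 1
          exact Finset.sum_congr rfl fun ω _ => (Finset.mul_sum _ _ _).symm
        rw [e1]
        have e2 : ∑ ω, pX ω * ∑ i ∈ S, r1 i ω ≤ ∑ ω, pX ω :=
          Finset.sum_le_sum fun ω _ => by nlinarith [hpX ω, hr1sum ω]
        rw [hpX1] at e2
        nlinarith
      have hw0nn : 0 ≤ w0 := by rw [hw0_def]; linarith
      -- rewrite the penalty sum
      have hsw : μ * ∑ ω, pX ω * (∑ i ∈ S, r1 i ω * ((V t S - V t (S.erase i)) - ξ i))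
          = ∑ i ∈ S, w i * ((V t S - V t (S.erase i)) - ξ i) := by
        have lhs1 : μ * ∑ ω, pX ω * (∑ i ∈ S, r1 i ω * ((V t S - V t (S.erase i)) - ξ i))
            = ∑ ω, ∑ i ∈ S, μ * (pX ω * (r1 i ω * ((V t S - V t (S.erase i)) - ξ i))) := by
          rw [Finset.mul_sum]
          refine Finset.sum_congr rfl fun ω _ => ?_
          rw [show μ * (pX ω * ∑ i ∈ S, r1 i ω * ((V t S - V t (S.erase i)) - ξ i))
              = (μ * pX ω) * ∑ i ∈ S, r1 i ω * ((V t S - V t (S.erase i)) - ξ i) from by ring,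
            Finset.mul_sum]
          exact Finset.sum_congr rfl fun i _ => by ring
        have rhs1 : ∑ i ∈ S, w i * ((V t S - V t (S.erase i)) - ξ i)
            = ∑ i ∈ S, ∑ ω, μ * (pX ω * (r1 i ω * ((V t S - V t (S.erase i)) - ξ i))) := by
          refine Finset.sum_congr rfl fun i _ => ?_
          rw [hw_def]
          simp only []
          rw [show (μ * ∑ ω, pX ω * r1 i ω) * ((V t S - V t (S.erase i)) - ξ i)
              = μ * ((∑ ω, pX ω * r1 i ω) * ((V t S - V t (S.erase i)) - ξ i)) from by ring,
            Finset.sum_mul, Finset.mul_sum]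
          exact Finset.sum_congr rfl fun ω _ => by ring
        rw [lhs1, rhs1, Finset.sum_comm]
      -- second bound
      have hb2 : V (t+1) S ≤ V t S + μ * ε + μ * aux_Ob pX q ξ β S r1
          - ∑ i ∈ S, w i * ((V t S - V t (S.erase i)) - ξ i) := by
        have e1 : ∑ ω, pX ω * aux_Rw (fun i => q i ω) β
              (fun i => V t S - V t (S.erase i)) S (fun i => r1 i ω)
            = aux_Ob pX q ξ β S r1 - ∑ ω, pX ω *
                (∑ i ∈ S, r1 i ω * ((V t S - V t (S.erase i)) - ξ i)) := by
          unfold aux_Ob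
          rw [← Finset.sum_sub_distrib]
          refine Finset.sum_congr rfl fun ω _ => ?_
          rw [hcost ω]
          ring
        rw [e1] at hb1
        have e2 : μ * (aux_Ob pX q ξ β S r1 - ∑ ω, pX ω *
              (∑ i ∈ S, r1 i ω * ((V t S - V t (S.erase i)) - ξ i)))
            = μ * aux_Ob pX q ξ β S r1
              - ∑ i ∈ S, w i * ((V t S - V t (S.erase i)) - ξ i) := by
          rw [mul_sub, hsw]
        rw [e2] at hb1
        linarith
      -- selection of near-optimal fluid solutions
      have hsel : ∀ S' : Finset (Fin N), ∃ σ, aux_Feas pX μ t S' σ ∧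
          sSup (aux_FSet pX q ξ β μ t S') ≤ μ * t * aux_Ob pX q ξ β S' σ + ε := by
        intro S'
        obtain ⟨y, hy, hlt⟩ := exists_lt_of_lt_csSup
          (aux_FSet_nonempty pX hpX hpX1 q ξ β hμ0 hμ1 hN t S')
          (sub_lt_self (sSup (aux_FSet pX q ξ β μ t S')) hε)
        obtain ⟨ρ, hfeas, rfl⟩ := hy
        exact ⟨ρ, hfeas, by linarith⟩
      obtain ⟨σ0, hσ0f, hσ0v⟩ := hsel S
      choose σf hσff hσfv using fun j => hsel (S.erase j)
      set τ : Fin N → Ω → ℝ := fun i ω => (1/((t:ℝ)+1)) * r1 i ω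
          + ((t:ℝ)/((t:ℝ)+1)) * (w0 * σ0 i ω + ∑ j ∈ S, w j * σf j i ω) with hτ_def
      obtain ⟨hτfeas, hτval⟩ := aux_combine pX hpX hpX1 q ξ hβ hμ0 hμ1 t S r1
        hr1pos hr1zero hr1sum σ0 hσ0f σf hσff w (fun i => by rw [hw_def]) w0 hw0_def
        τ (fun i ω => by rw [hτ_def])
      have hle : μ * ((t+1 : ℕ):ℝ) * aux_Ob pX q ξ β S τ
          ≤ sSup (aux_FSet pX q ξ β μ (t+1) S) :=
        le_csSup (aux_FSet_bddAbove pX hpX q ξ hβ hμ0 (t+1) S) ⟨τ, hτfeas, rfl⟩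
      have hcast : ((t+1 : ℕ):ℝ) = (t:ℝ) + 1 := by push_cast; ring
      rw [hcast] at hle
      -- assemble
      have E1 : ∑ i ∈ S, w i * ((V t S - V t (S.erase i)) - ξ i)
          = (∑ i ∈ S, w i) * V t S - ∑ i ∈ S, w i * V t (S.erase i)
            - ∑ i ∈ S, w i * ξ i := by
        have e : ∀ i ∈ S, w i * ((V t S - V t (S.erase i)) - ξ i)
            = w i * V t S - w i * V t (S.erase i) - w i * ξ i := fun i _ => by ring
        rw [Finset.sum_congr rfl e, Finset.sum_sub_distrib, Finset.sum_sub_distrib,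
          ← Finset.sum_mul]
      have E2 : ∑ i ∈ S, w i * V t (S.erase i)
          ≤ ∑ i ∈ S, w i * (((∑ k ∈ S, ξ k) - ξ i)
              + (μ * t * aux_Ob pX q ξ β (S.erase i) (σf i) + ε)) := by
        refine Finset.sum_le_sum fun i hi => mul_le_mul_of_nonneg_left ?_ (hwnn i)
        have h1 := ih (S.erase i)
        have h2 := hσfv i
        have h3 : ∑ k ∈ S.erase i, ξ k = (∑ k ∈ S, ξ k) - ξ i := by
          rw [← Finset.add_sum_erase S ξ hi]
          ring
        rw [h3] at h1
        linarith
      have E3 : ∑ i ∈ S, w i * (((∑ k ∈ S, ξ k) - ξ i)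
              + (μ * t * aux_Ob pX q ξ β (S.erase i) (σf i) + ε))
          = (∑ i ∈ S, w i) * (∑ k ∈ S, ξ k) - ∑ i ∈ S, w i * ξ i
            + ∑ i ∈ S, w i * (μ * t * aux_Ob pX q ξ β (S.erase i) (σf i))
            + (∑ i ∈ S, w i) * ε := by
        have e : ∀ i ∈ S, w i * (((∑ k ∈ S, ξ k) - ξ i)
              + (μ * t * aux_Ob pX q ξ β (S.erase i) (σf i) + ε))
            = w i * (∑ k ∈ S, ξ k) - w i * ξ i
              + w i * (μ * t * aux_Ob pX q ξ β (S.erase i) (σf i)) + w i * ε :=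
          fun i _ => by ring
        rw [Finset.sum_congr rfl e, Finset.sum_add_distrib, Finset.sum_add_distrib,
          Finset.sum_sub_distrib, ← Finset.sum_mul, ← Finset.sum_mul]
      have E4 : V t S ≤ (∑ i ∈ S, ξ i) + (μ * t * aux_Ob pX q ξ β S σ0 + ε) := by
        have h1 := ih S
        linarith [hσ0v]
      have E5 : w0 * V t S ≤ w0 * ((∑ i ∈ S, ξ i)
          + (μ * t * aux_Ob pX q ξ β S σ0 + ε)) :=
        mul_le_mul_of_nonneg_left E4 hw0nn
      have E6 : w0 * V t S = V t S - (∑ i ∈ S, w i) * V t S := by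
        rw [hw0_def]; ring
      have E7 : μ * (t:ℝ) * (w0 * aux_Ob pX q ξ β S σ0
            + ∑ j ∈ S, w j * aux_Ob pX q ξ β (S.erase j) (σf j))
          = w0 * (μ * t * aux_Ob pX q ξ β S σ0)
            + ∑ j ∈ S, w j * (μ * t * aux_Ob pX q ξ β (S.erase j) (σf j)) := by
        rw [mul_add]
        congr 1
        · ring
        · rw [Finset.mul_sum]
          exact Finset.sum_congr rfl fun j _ => by ring
      have E8 : w0 * ((∑ i ∈ S, ξ i) + (μ * t * aux_Ob pX q ξ β S σ0 + ε))
          = w0 * (∑ i ∈ S, ξ i) + w0 * (μ * t * aux_Ob pX q ξ β S σ0) + w0 * ε := by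
        ring
      have E9 : w0 * ε + (∑ i ∈ S, w i) * ε = ε := by
        rw [hw0_def]; ring
      have E10 : w0 * (∑ i ∈ S, ξ i) + (∑ i ∈ S, w i) * (∑ i ∈ S, ξ i)
          = ∑ i ∈ S, ξ i := by
        rw [hw0_def]; ring
      rw [E7] at hτval
      linarith [hb2, E1, E2, E3, E5, E6, hτval, hle, E8, E9, E10]
    refine le_of_forall_pos_le_add fun ε hε => ?_
    have h2 := key (ε/2) (by positivity)
    nlinarith [h2, hε.le, hμ1]

lemma aux_Ob_univ (pX : Ω → ℝ) (q : Fin N → Ω → ℝ) (ξ : Fin N → ℝ) (β : ℝ)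
    (ρ : Fin N → Ω → ℝ) :
    aux_Ob pX q ξ β Finset.univ ρ
      = ∑ i, ∑ ω, pX ω * (ρ i ω *
          ((1 / β) * (Real.log (ρ i ω) - Real.log (1 - ∑ j, ρ j ω) - q i ω) - ξ i)) := by
  unfold aux_Ob aux_Rw
  have e : ∀ ω : Ω, pX ω * ∑ i, ρ i ω *
        ((1/β) * (Real.log (ρ i ω) - Real.log (1 - ∑ j, ρ j ω) - q i ω) - ξ i)
      = ∑ i, pX ω * (ρ i ω *
        ((1/β) * (Real.log (ρ i ω) - Real.log (1 - ∑ j, ρ j ω) - q i ω) - ξ i)) :=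
    fun ω => Finset.mul_sum _ _ _
  rw [Finset.sum_congr rfl fun ω _ => e ω, Finset.sum_comm]


end AuxStmt14

/-- The fluid approximation is an upper bound on the optimal expected revenue
(Appendix Proposition): `V_T(S̄) ≤ V^Fluid_T` for the full option set `S̄`. -/
theorem stmt_14 {Ω : Type*} [Fintype Ω] [Nonempty Ω]
    (pX : Ω → ℝ) (hpX : ∀ ω, 0 ≤ pX ω) (hpX1 : ∑ ω, pX ω = 1)
    (N : ℕ) (hN : 1 ≤ N)
    (q : Fin N → Ω → ℝ) (ξ : Fin N → ℝ)
    (β : ℝ) (hβ : β < 0)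
    (μ : ℝ) (hμ0 : 0 < μ) (hμ1 : μ ≤ 1)
    (V : ℕ → Finset (Fin N) → ℝ)
    (hV0 : ∀ S : Finset (Fin N), V 0 S = ∑ i ∈ S, ξ i)
    (hV : ∀ t : ℕ, 1 ≤ t → ∀ S : Finset (Fin N),
      V t S = V (t - 1) S + μ * ∑ ω, pX ω *
        (⨆ p : Fin N → ℝ, ∑ i ∈ S,
          (Real.exp (q i ω + β * p i) / (1 + ∑ j ∈ S, Real.exp (q j ω + β * p j))) *
            (p i - (V (t - 1) S - V (t - 1) (S.erase i)))))
    (T : ℕ) (hT : 1 ≤ T)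
    (VFluid : ℝ)
    (hVFluid : VFluid = sSup {x : ℝ | ∃ ρ : Fin N → Ω → ℝ,
      (∀ i ω, 0 < ρ i ω ∧ ρ i ω < 1) ∧
      (∀ ω, ∑ i, ρ i ω < 1) ∧
      (∀ i, ∑ ω, pX ω * ρ i ω ≤ 1 / (μ * T)) ∧
      x = μ * T * ∑ i, ∑ ω, pX ω * (ρ i ω *
        ((1 / β) * (Real.log (ρ i ω) - Real.log (1 - ∑ j, ρ j ω) - q i ω) - ξ i)) +
        ∑ i, ξ i}) :
    V T Finset.univ ≤ VFluid := by
  have hmain := aux_main pX hpX hpX1 hN q ξ hβ hμ0 hμ1 V hV0 hV T Finset.univ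
  have hμT : (0:ℝ) < μ * (T:ℝ) := by
    have : (1:ℝ) ≤ (T:ℝ) := by exact_mod_cast hT
    nlinarith
  -- bounded above
  have hbdd : BddAbove {x : ℝ | ∃ ρ : Fin N → Ω → ℝ,
      (∀ i ω, 0 < ρ i ω ∧ ρ i ω < 1) ∧
      (∀ ω, ∑ i, ρ i ω < 1) ∧
      (∀ i, ∑ ω, pX ω * ρ i ω ≤ 1 / (μ * T)) ∧
      x = μ * T * ∑ i, ∑ ω, pX ω * (ρ i ω *
        ((1 / β) * (Real.log (ρ i ω) - Real.log (1 - ∑ j, ρ j ω) - q i ω) - ξ i)) +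
        ∑ i, ξ i} := by
    refine ⟨μ * T * ∑ ω, pX ω * ((N : ℝ) * ((Real.exp 1)⁻¹ / (-β))
      + ∑ i, (|q i ω| / (-β) + |ξ i|)) + ∑ i, ξ i, ?_⟩
    rintro x ⟨ρ, hc1, hc2, hc3, rfl⟩
    rw [← aux_Ob_univ]
    have hOb : aux_Ob pX q ξ β Finset.univ ρ ≤ ∑ ω, pX ω *
        ((N : ℝ) * ((Real.exp 1)⁻¹ / (-β)) + ∑ i, (|q i ω| / (-β) + |ξ i|)) := by
      refine Finset.sum_le_sum fun ω _ => mul_le_mul_of_nonneg_left ?_ (hpX ω)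
      exact aux_Rw_bound (fun i => q i ω) hβ ξ Finset.univ
        ⟨fun i => (hc1 i ω).1.le, hc2 ω⟩
    nlinarith [hOb, hμT.le]
  -- every fluid-set element is dominated by VFluid
  have hVS : ∀ y ∈ aux_FSet pX q ξ β μ T Finset.univ, (∑ i, ξ i) + y ≤ VFluid := by
    rintro y ⟨ρ, hfeas, rfl⟩
    rw [hVFluid]
    refine le_csSup hbdd ?_
    refine ⟨ρ, ?_, ?_, ?_, ?_⟩
    · intro i ω
      refine ⟨hfeas.1 i (Finset.mem_univ i) ω, ?_⟩
      have h1 : ρ i ω ≤ ∑ j, ρ j ω :=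
        Finset.single_le_sum (fun j _ => (hfeas.1 j (Finset.mem_univ j) ω).le)
          (Finset.mem_univ i)
      have h2 := hfeas.2.2.1 ω
      linarith
    · exact hfeas.2.2.1
    · intro i
      rw [le_div_iff₀ hμT]
      have := hfeas.2.2.2 i (Finset.mem_univ i)
      nlinarith
    · rw [← aux_Ob_univ]
      ring
  have hne := aux_FSet_nonempty pX hpX hpX1 q ξ β hμ0 hμ1 hN T Finset.univ
  have hsup : sSup (aux_FSet pX q ξ β μ T Finset.univ) ≤ VFluid - ∑ i, ξ i :=
    csSup_le hne fun y hy => by have := hVS y hy; linarith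
  linarith
end

section
/- Product decay bound (from the proof of Theorem 4). Let C ≥ 0 and let δ : ℕ → ℝ satisfy 0 ≤ δ_t ≤ 1 for all t ≥ 1 and Σ_{t=1}^∞ |δ_t − 1/t| ≤ C. Then for all integers t' and T with 0 ≤ t' ≤ T and T ≥ 1: ∏_{t=t'+1}^T (1 − δ_t) ≤ exp( C + Σ_{t=1}^{t'} 1/t ) / T. -/
/-- Product decay bound (from the proof of Theorem 4): if `δ_t ∈ [0,1]` equals
`1/t` up to an absolutely summable perturbation with total mass at most `C`,
then `∏_{t=t'+1}^T (1 − δ_t) ≤ exp(C + Σ_{t=1}^{t'} 1/t) / T`. -/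
theorem stmt_19 (C : ℝ) (hC : 0 ≤ C) (δ : ℕ → ℝ)
    (hδ : ∀ t : ℕ, 1 ≤ t → 0 ≤ δ t ∧ δ t ≤ 1)
    (hsum : ∀ T : ℕ, ∑ t ∈ Finset.Icc 1 T, |δ t - 1 / (t : ℝ)| ≤ C) :
    ∀ t' T : ℕ, t' ≤ T → 1 ≤ T →
      ∏ t ∈ Finset.Icc (t' + 1) T, (1 - δ t) ≤
        Real.exp (C + ∑ t ∈ Finset.Icc 1 t', 1 / (t : ℝ)) / T := by
  intro t' T htT hT
  have hTpos : (0:ℝ) < T := by exact_mod_cast hT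
  -- Step 1: product ≤ exp(-sum δ)
  have h1 : ∏ t ∈ Finset.Icc (t' + 1) T, (1 - δ t) ≤
      Real.exp (-∑ t ∈ Finset.Icc (t' + 1) T, δ t) := by
    rw [← Finset.sum_neg_distrib, Real.exp_sum]
    apply Finset.prod_le_prod
    · intro t ht
      have ht1 : 1 ≤ t := by
        have := (Finset.mem_Icc.mp ht).1; omega
      linarith [(hδ t ht1).2]
    · intro t ht
      have := Real.add_one_le_exp (-δ t)
      linarith
  -- Step 2: sum δ ≥ log T - C - sum_{1}^{t'} 1/t
  have hsplit : ∑ t ∈ Finset.Icc 1 t', (1 / (t : ℝ)) +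
      ∑ t ∈ Finset.Icc (t' + 1) T, (1 / (t : ℝ)) = ∑ t ∈ Finset.Icc 1 T, (1 / (t : ℝ)) := by
    rw [← Finset.sum_union]
    · congr 1
      ext x
      simp only [Finset.mem_union, Finset.mem_Icc]
      omega
    · rw [Finset.disjoint_left]
      intro x hx hx'
      simp only [Finset.mem_Icc] at hx hx'
      omega
  have hlog : Real.log T ≤ ∑ t ∈ Finset.Icc 1 T, (1 / (t : ℝ)) := by
    have h1 : Real.log ((T:ℕ) + 1 : ℕ) ≤ (harmonic T : ℝ) := log_add_one_le_harmonic T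
    have h2 : Real.log T ≤ Real.log ((T:ℕ) + 1 : ℕ) := by
      apply Real.log_le_log hTpos; push_cast; linarith
    have h3 : (harmonic T : ℝ) = ∑ t ∈ Finset.Icc 1 T, (1 / (t : ℝ)) := by
      rw [harmonic_eq_sum_Icc]
      push_cast
      simp [one_div]
    linarith
  have habs : ∑ t ∈ Finset.Icc (t' + 1) T, |δ t - 1 / (t : ℝ)| ≤ C := by
    refine le_trans ?_ (hsum T)
    apply Finset.sum_le_sum_of_subset_of_nonneg
    · intro x hx
      simp only [Finset.mem_Icc] at hx ⊢
      omega
    · intro i _ _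
      exact abs_nonneg _
  have hlb : ∑ t ∈ Finset.Icc (t' + 1) T, (1 / (t : ℝ)) - C ≤
      ∑ t ∈ Finset.Icc (t' + 1) T, δ t := by
    have : ∑ t ∈ Finset.Icc (t' + 1) T, ((1 / (t : ℝ)) - δ t) ≤
        ∑ t ∈ Finset.Icc (t' + 1) T, |δ t - 1 / (t : ℝ)| := by
      apply Finset.sum_le_sum
      intro i _
      rw [abs_sub_comm]
      exact le_abs_self _
    rw [Finset.sum_sub_distrib] at this
    linarith
  have h2 : Real.exp (-∑ t ∈ Finset.Icc (t' + 1) T, δ t) ≤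
      Real.exp (C + ∑ t ∈ Finset.Icc 1 t', (1 / (t : ℝ)) - Real.log T) := by
    apply Real.exp_le_exp.mpr
    have : Real.log T - ∑ t ∈ Finset.Icc 1 t', (1 / (t : ℝ)) ≤
        ∑ t ∈ Finset.Icc (t' + 1) T, (1 / (t : ℝ)) := by linarith
    linarith
  calc ∏ t ∈ Finset.Icc (t' + 1) T, (1 - δ t) ≤ _ := h1
    _ ≤ Real.exp (C + ∑ t ∈ Finset.Icc 1 t', (1 / (t : ℝ)) - Real.log T) := h2
    _ = Real.exp (C + ∑ t ∈ Finset.Icc 1 t', (1 / (t : ℝ))) / T := by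
        rw [Real.exp_sub, Real.exp_log hTpos]
end
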